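/- arXiv:1804.00748 — 5 statements merged into one kernel-verified Lean document; each statement's English description precedes it below -/
import Mathlib

section
/- Let (X,d) be any metric space and S ⊆ Isom(X) a finite set of isometries. Then for every integer k ≥ 1 one has the chain of inequalities λ(S) ≤ λ_k(S) ≤ λ_∞(S) ≤ ℓ(S) ≤ L(S^k)/k ≤ L(S). Moreover ℓ(S^k) = k·ℓ(S) and λ_∞(S^k) = k·λ_∞(S) for every k ≥ 1, and λ_∞(S) = limsup_{n→∞} λ(S^n)/n. -/
open Pointwise Filter

/-- The joint displacement of a set of isometries at a point:
`L(S,x) = max_{s ∈ S} d(x, s x)`. -/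
noncomputable def jointDispAt {X : Type*} [MetricSpace X] (S : Set (X ≃ᵢ X)) (x : X) : ℝ :=
  sSup ((fun s : X ≃ᵢ X => dist x (s x)) '' S)

/-- The joint minimal displacement `L(S) = inf_x L(S,x)`. -/
noncomputable def jointMinDisp {X : Type*} [MetricSpace X] (S : Set (X ≃ᵢ X)) : ℝ :=
  sInf (Set.range (jointDispAt S))

/-- The asymptotic joint displacement `ℓ(S) = lim_n L(S^n)/n`; the limit exists by
subadditivity, hence agrees with the `limsup` used here. -/
noncomputable def asympDisp {X : Type*} [MetricSpace X] (S : Set (X ≃ᵢ X)) : ℝ :=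
  Filter.limsup (fun n : ℕ => jointMinDisp (S ^ n) / n) Filter.atTop

/-- `λ(S) = max_{s ∈ S} ℓ(s)`. -/
noncomputable def lamD {X : Type*} [MetricSpace X] (S : Set (X ≃ᵢ X)) : ℝ :=
  sSup ((fun s : X ≃ᵢ X => asympDisp {s}) '' S)

/-- `λ_k(S) = max_{1 ≤ j ≤ k} λ(S^j)/j`. -/
noncomputable def lamK {X : Type*} [MetricSpace X] (k : ℕ) (S : Set (X ≃ᵢ X)) : ℝ :=
  sSup ((fun j : ℕ => lamD (S ^ j) / j) '' Set.Icc 1 k)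

/-- `λ_∞(S) = sup_{j ≥ 1} λ(S^j)/j`. -/
noncomputable def lamInf {X : Type*} [MetricSpace X] (S : Set (X ≃ᵢ X)) : ℝ :=
  sSup ((fun j : ℕ => lamD (S ^ j) / j) '' Set.Ici 1)

/-- A geodesic segment from `a` to `b`: an isometric image of the interval `[0, d(a,b)]`. -/
def IsGeodesicSegment {X : Type*} [MetricSpace X] (s : Set X) (a b : X) : Prop :=
  ∃ f : ℝ → X, f 0 = a ∧ f (dist a b) = b ∧
    (∀ u ∈ Set.Icc (0 : ℝ) (dist a b), ∀ v ∈ Set.Icc (0 : ℝ) (dist a b),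
      dist (f u) (f v) = |u - v|) ∧
    s = f '' Set.Icc (0 : ℝ) (dist a b)

/-- A geodesic metric space: every two points are joined by a geodesic segment. -/
def GeodesicSpace (X : Type*) [MetricSpace X] : Prop :=
  ∀ a b : X, ∃ s : Set X, IsGeodesicSegment s a b

/-- `δ`-hyperbolicity: every geodesic triangle is `δ`-thin, i.e. each side is contained in
the closed `δ`-neighborhood of the union of the other two sides. -/
def GromovHyperbolic (X : Type*) [MetricSpace X] (δ : ℝ) : Prop :=
  ∀ a b c : X, ∀ sab sbc sca : Set X,
    IsGeodesicSegment sab a b → IsGeodesicSegment sbc b c → IsGeodesicSegment sca c a →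
      (∀ x ∈ sab, ∃ y ∈ sbc ∪ sca, dist x y ≤ δ) ∧
      (∀ x ∈ sbc, ∃ y ∈ sab ∪ sca, dist x y ≤ δ) ∧
      (∀ x ∈ sca, ∃ y ∈ sab ∪ sbc, dist x y ≤ δ)

/-- The CAT(0) comparison inequality: for all `a b c` and every midpoint `m` of a geodesic
from `b` to `c`, `2 d(a,m)² ≤ d(a,b)² + d(a,c)² - d(b,c)²/2`. -/
def CAT0 (X : Type*) [MetricSpace X] : Prop :=
  ∀ a b c m : X, dist b m = dist b c / 2 → dist m c = dist b c / 2 →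
    2 * dist a m ^ 2 ≤ dist a b ^ 2 + dist a c ^ 2 - dist b c ^ 2 / 2

/-- A subset is (geodesically) convex if every geodesic segment between two of its points is
contained in it. -/
def GeodConvex {X : Type*} [MetricSpace X] (C : Set X) : Prop :=
  ∀ a ∈ C, ∀ b ∈ C, ∀ s : Set X, IsGeodesicSegment s a b → s ⊆ C

/-- Translation length `L(g) = inf_x d(x, g x)`. -/
noncomputable def transLen {X : Type*} [MetricSpace X] (g : X ≃ᵢ X) : ℝ :=
  sInf (Set.range fun x : X => dist x (g x))

/-- Asymptotic translation length `ℓ(g) = lim_n L(g^n)/n`. -/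
noncomputable def asympTransLen {X : Type*} [MetricSpace X] (g : X ≃ᵢ X) : ℝ :=
  Filter.limsup (fun n : ℕ => transLen (g ^ n) / n) Filter.atTop

/-!
For a fixed base point `x`, the sequence `n ↦ L(S^n, x)` is subadditive, so by Fekete's lemma
`L(S^n, x)/n` converges to `ℓ(S, x) = inf_n L(S^n, x)/n`. Since
`inf_x ℓ(S, x) ≤ L(S^n)/n ≤ L(S^n, x)/n`, the sequence `L(S^n)/n` really converges, to
`inf_x ℓ(S, x)`, and passing to the subsequence `n ↦ kn` gives `ℓ(S^k) = k ℓ(S)`. For the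
`λ`'s, `ℓ(s^j) = j ℓ(s)` and `s^j ∈ S^j` give `j λ(S) ≤ λ(S^j)`, so `λ(S^j)/j` grows along
multiples, which makes its supremum both its `limsup` and homogeneous under `S ↦ S^k`.
-/

theorem Set.Finite.pow {M : Type*} [Monoid M] {S : Set M} (hS : S.Finite) :
    ∀ n : ℕ, (S ^ n).Finite
  | 0 => by simp
  | n + 1 => by rw [pow_succ]; exact (hS.pow n).mul hS

open Set Filter Topology

theorem tendsto_apply_mul_div_of_tendsto {u : ℕ → ℝ} {l : ℝ}
    (hu : Tendsto (fun n : ℕ => u n / n) atTop (𝓝 l)) {k : ℕ} (hk : 0 < k) :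
    Tendsto (fun n : ℕ => u (k * n) / n) atTop (𝓝 (k * l)) := by
  have hk' : (k : ℝ) ≠ 0 := by positivity
  refine ((hu.comp (tendsto_id.const_mul_atTop' hk)).const_mul (k : ℝ)).congr fun n => ?_
  simp only [Function.comp_apply, id, Nat.cast_mul]
  rw [← mul_div_assoc, mul_div_mul_left _ _ hk']

theorem limsup_eq_sSup_of_le_apply_mul {f : ℕ → ℝ} (hf : ∀ j m, 0 < m → f j ≤ f (j * m))
    (hbdd : BddAbove (f '' Ici 1)) : limsup f atTop = sSup (f '' Ici 1) := by
  have hle : ∀ᶠ n in atTop, f n ≤ sSup (f '' Ici 1) :=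
    eventually_atTop.2 ⟨1, fun n hn => le_csSup hbdd ⟨n, hn, rfl⟩⟩
  apply le_antisymm
  · refine limsup_le_of_le (isCoboundedUnder_le_of_eventually_le (x := f 1) _ ?_) hle
    filter_upwards [eventually_gt_atTop 0] with n hn
    simpa using hf 1 n hn
  · refine csSup_le (nonempty_Ici.image f) ?_
    rintro _ ⟨j, hj, rfl⟩
    have hfreq : ∃ᶠ m in atTop, f j ≤ f (j * m) :=
      (eventually_gt_atTop 0 |>.mono fun m hm => hf j m hm).frequently
    exact le_limsup_of_frequently_le ((tendsto_id.const_mul_atTop' hj).frequently hfreq)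
      ⟨_, hle⟩

section Displacement

variable {X : Type*} [MetricSpace X] {S T : Set (X ≃ᵢ X)}

theorem jointDispAt_nonneg (S : Set (X ≃ᵢ X)) (x : X) : 0 ≤ jointDispAt S x :=
  Real.sSup_nonneg (by rintro _ ⟨s, -, rfl⟩; exact dist_nonneg)

theorem dist_le_jointDispAt (hS : S.Finite) {s : X ≃ᵢ X} (hs : s ∈ S) (x : X) :
    dist x (s x) ≤ jointDispAt S x :=
  le_csSup (hS.image _).bddAbove ⟨s, hs, rfl⟩

theorem jointDispAt_le {x : X} {c : ℝ} (hc : 0 ≤ c) (h : ∀ s ∈ S, dist x (s x) ≤ c) :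
    jointDispAt S x ≤ c :=
  Real.sSup_le (by rintro _ ⟨s, hs, rfl⟩; exact h s hs) hc

theorem jointDispAt_mono (hT : T.Finite) (hST : S ⊆ T) (x : X) :
    jointDispAt S x ≤ jointDispAt T x :=
  jointDispAt_le (jointDispAt_nonneg T x) fun _ hs => dist_le_jointDispAt hT (hST hs) x

theorem jointDispAt_one (x : X) : jointDispAt 1 x = 0 :=
  le_antisymm (jointDispAt_le le_rfl fun s hs => by simp [Set.mem_one.1 hs])
    (jointDispAt_nonneg 1 x)

theorem jointDispAt_mul_le (hS : S.Finite) (hT : T.Finite) (x : X) :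
    jointDispAt (S * T) x ≤ jointDispAt S x + jointDispAt T x := by
  refine jointDispAt_le (add_nonneg (jointDispAt_nonneg S x) (jointDispAt_nonneg T x)) ?_
  rintro _ ⟨s, hs, t, ht, rfl⟩
  calc dist x (s (t x)) ≤ dist x (s x) + dist (s x) (s (t x)) := dist_triangle _ _ _
    _ = dist x (s x) + dist x (t x) := by rw [s.dist_eq]
    _ ≤ jointDispAt S x + jointDispAt T x :=
      add_le_add (dist_le_jointDispAt hS hs x) (dist_le_jointDispAt hT ht x)

theorem subadditive_jointDispAt_pow (hS : S.Finite) (x : X) :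
    Subadditive fun n => jointDispAt (S ^ n) x := fun m n => by
  simp only [pow_add]
  exact jointDispAt_mul_le (hS.pow m) (hS.pow n) x

theorem jointDispAt_pow_le (hS : S.Finite) (x : X) (n : ℕ) :
    jointDispAt (S ^ n) x ≤ n * jointDispAt S x := by
  induction n with
  | zero => simp [jointDispAt_one]
  | succ n ih =>
    calc jointDispAt (S ^ (n + 1)) x ≤ jointDispAt (S ^ n) x + jointDispAt (S ^ 1) x :=
          subadditive_jointDispAt_pow hS x n 1
      _ ≤ (n + 1 : ℕ) * jointDispAt S x := by push_cast; rw [pow_one]; linarith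

theorem jointMinDisp_eq_iInf (S : Set (X ≃ᵢ X)) :
    jointMinDisp S = ⨅ x, jointDispAt S x := rfl

theorem bddBelow_range_jointDispAt (S : Set (X ≃ᵢ X)) : BddBelow (range (jointDispAt S)) :=
  ⟨0, by rintro _ ⟨x, rfl⟩; exact jointDispAt_nonneg S x⟩

theorem jointMinDisp_nonneg (S : Set (X ≃ᵢ X)) : 0 ≤ jointMinDisp S :=
  Real.iInf_nonneg (jointDispAt_nonneg S)

theorem jointMinDisp_le_jointDispAt (S : Set (X ≃ᵢ X)) (x : X) :
    jointMinDisp S ≤ jointDispAt S x :=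
  ciInf_le (bddBelow_range_jointDispAt S) x

theorem jointMinDisp_mono (hT : T.Finite) (hST : S ⊆ T) : jointMinDisp S ≤ jointMinDisp T :=
  ciInf_mono (bddBelow_range_jointDispAt S) (jointDispAt_mono hT hST)

theorem jointMinDisp_pow_le (hS : S.Finite) (n : ℕ) :
    jointMinDisp (S ^ n) ≤ n * jointMinDisp S := by
  rw [jointMinDisp_eq_iInf, jointMinDisp_eq_iInf, Real.mul_iInf_of_nonneg n.cast_nonneg]
  exact ciInf_mono (bddBelow_range_jointDispAt _) fun x => jointDispAt_pow_le hS x n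

/-- The pointwise asymptotic displacement `ℓ(S, x) = lim_n L(S^n, x)/n`, written as the
infimum that Fekete's lemma identifies with the limit. -/
noncomputable def stableDispAt (S : Set (X ≃ᵢ X)) (x : X) : ℝ :=
  sInf ((fun n : ℕ => jointDispAt (S ^ n) x / n) '' Ici 1)

theorem bddBelow_range_jointDispAt_pow_div (S : Set (X ≃ᵢ X)) (x : X) :
    BddBelow (range fun n : ℕ => jointDispAt (S ^ n) x / n) :=
  ⟨0, by rintro _ ⟨n, rfl⟩; exact div_nonneg (jointDispAt_nonneg _ x) n.cast_nonneg⟩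

theorem stableDispAt_nonneg (S : Set (X ≃ᵢ X)) (x : X) : 0 ≤ stableDispAt S x :=
  Real.sInf_nonneg <| by
    rintro _ ⟨n, -, rfl⟩
    exact div_nonneg (jointDispAt_nonneg _ x) n.cast_nonneg

theorem tendsto_stableDispAt (hS : S.Finite) (x : X) :
    Tendsto (fun n : ℕ => jointDispAt (S ^ n) x / n) atTop (𝓝 (stableDispAt S x)) := by
  have h := (subadditive_jointDispAt_pow hS x).tendsto_lim
    (bddBelow_range_jointDispAt_pow_div S x)
  rwa [Subadditive.lim] at h

theorem stableDispAt_le_div (S : Set (X ≃ᵢ X)) (x : X) {n : ℕ} (hn : 1 ≤ n) :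
    stableDispAt S x ≤ jointDispAt (S ^ n) x / n :=
  csInf_le ((bddBelow_range_jointDispAt_pow_div S x).mono (image_subset_range _ _)) ⟨n, hn, rfl⟩

theorem tendsto_jointMinDisp_pow_div_iInf_stableDispAt (hS : S.Finite) :
    Tendsto (fun n : ℕ => jointMinDisp (S ^ n) / n) atTop (𝓝 (⨅ x, stableDispAt S x)) := by
  rcases isEmpty_or_nonempty X with hX | hX
  · simp [jointMinDisp_eq_iInf]
  refine tendsto_order.2 ⟨fun a ha => ?_, fun b hb => ?_⟩
  · filter_upwards [eventually_ge_atTop 1] with n hn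
    refine ha.trans_le ?_
    rw [div_eq_mul_inv, jointMinDisp_eq_iInf, Real.iInf_mul_of_nonneg (by positivity)]
    refine ciInf_mono ⟨0, ?_⟩ fun x => stableDispAt_le_div S x hn
    rintro _ ⟨x, rfl⟩
    exact stableDispAt_nonneg S x
  · obtain ⟨x, hx⟩ := exists_lt_of_ciInf_lt hb
    filter_upwards [(tendsto_stableDispAt hS x).eventually (gt_mem_nhds hx)] with n hn
    exact (div_le_div_of_nonneg_right (jointMinDisp_le_jointDispAt _ x) n.cast_nonneg).trans_lt hn

theorem tendsto_asympDisp (hS : S.Finite) :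
    Tendsto (fun n : ℕ => jointMinDisp (S ^ n) / n) atTop (𝓝 (asympDisp S)) := by
  have h := tendsto_jointMinDisp_pow_div_iInf_stableDispAt hS
  rwa [asympDisp, h.limsup_eq]

theorem asympDisp_nonneg (hS : S.Finite) : 0 ≤ asympDisp S :=
  ge_of_tendsto' (tendsto_asympDisp hS) fun n => div_nonneg (jointMinDisp_nonneg _) n.cast_nonneg

theorem asympDisp_mono (hT : T.Finite) (hST : S ⊆ T) : asympDisp S ≤ asympDisp T :=
  le_of_tendsto_of_tendsto' (tendsto_asympDisp (hT.subset hST)) (tendsto_asympDisp hT) fun n =>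
    div_le_div_of_nonneg_right (jointMinDisp_mono (hT.pow n) (pow_subset_pow_left hST))
      n.cast_nonneg

theorem asympDisp_le_jointMinDisp (hS : S.Finite) : asympDisp S ≤ jointMinDisp S := by
  refine le_of_tendsto (tendsto_asympDisp hS) ?_
  filter_upwards [eventually_gt_atTop 0] with n hn
  rw [div_le_iff₀ (by positivity), mul_comm]
  exact jointMinDisp_pow_le hS n

theorem asympDisp_pow (hS : S.Finite) {k : ℕ} (hk : 0 < k) :
    asympDisp (S ^ k) = k * asympDisp S := by
  refine tendsto_nhds_unique (tendsto_asympDisp (hS.pow k)) ?_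
  simpa only [← pow_mul] using tendsto_apply_mul_div_of_tendsto (tendsto_asympDisp hS) hk

theorem lamD_nonneg (S : Set (X ≃ᵢ X)) : 0 ≤ lamD S :=
  Real.sSup_nonneg (by rintro _ ⟨s, -, rfl⟩; exact asympDisp_nonneg (finite_singleton s))

theorem asympDisp_singleton_le_lamD (hS : S.Finite) {s : X ≃ᵢ X} (hs : s ∈ S) :
    asympDisp {s} ≤ lamD S :=
  le_csSup (hS.image _).bddAbove ⟨s, hs, rfl⟩

theorem lamD_le_asympDisp (hS : S.Finite) : lamD S ≤ asympDisp S :=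
  Real.sSup_le (by rintro _ ⟨s, hs, rfl⟩; exact asympDisp_mono hS (singleton_subset_iff.2 hs))
    (asympDisp_nonneg hS)

theorem mul_lamD_le_lamD_pow (hS : S.Finite) {j : ℕ} (hj : 0 < j) :
    j * lamD S ≤ lamD (S ^ j) := by
  have hj' : (0 : ℝ) < j := by exact_mod_cast hj
  rw [← le_div_iff₀' hj']
  refine Real.sSup_le ?_ (div_nonneg (lamD_nonneg _) hj'.le)
  rintro _ ⟨s, hs, rfl⟩
  rw [le_div_iff₀' hj', ← asympDisp_pow (finite_singleton s) hj, singleton_pow]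
  exact asympDisp_singleton_le_lamD (hS.pow j) (pow_mem_pow hs)

theorem lamD_pow_div_le_asympDisp (hS : S.Finite) {j : ℕ} (hj : 0 < j) :
    lamD (S ^ j) / j ≤ asympDisp S := by
  rw [div_le_iff₀' (by exact_mod_cast hj), ← asympDisp_pow hS hj]
  exact lamD_le_asympDisp (hS.pow j)

theorem lamD_pow_div_le_lamD_pow_mul_div (hS : S.Finite) (j : ℕ) {m : ℕ} (hm : 0 < m) :
    lamD (S ^ j) / j ≤ lamD (S ^ (j * m)) / (j * m : ℕ) := by
  have hm' : (m : ℝ) ≠ 0 := by positivity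
  calc lamD (S ^ j) / j = m * lamD (S ^ j) / (j * m : ℕ) := by
        push_cast
        rw [mul_comm (j : ℝ), mul_div_mul_left _ _ hm']
    _ ≤ lamD (S ^ (j * m)) / (j * m : ℕ) := by
        gcongr
        rw [pow_mul]
        exact mul_lamD_le_lamD_pow (hS.pow j) hm

theorem bddAbove_lamD_pow_div (hS : S.Finite) :
    BddAbove ((fun j : ℕ => lamD (S ^ j) / j) '' Ici 1) :=
  ⟨asympDisp S, by rintro _ ⟨j, hj, rfl⟩; exact lamD_pow_div_le_asympDisp hS hj⟩

theorem lamD_pow_div_le_lamInf (hS : S.Finite) {j : ℕ} (hj : 1 ≤ j) :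
    lamD (S ^ j) / j ≤ lamInf S :=
  le_csSup (bddAbove_lamD_pow_div hS) ⟨j, hj, rfl⟩

theorem lamD_le_lamK {k : ℕ} (hk : 1 ≤ k) : lamD S ≤ lamK k S :=
  le_csSup ((finite_Icc 1 k).image _).bddAbove ⟨1, ⟨le_rfl, hk⟩, by simp⟩

theorem lamK_le_lamInf (hS : S.Finite) {k : ℕ} (hk : 1 ≤ k) : lamK k S ≤ lamInf S :=
  csSup_le ((nonempty_Icc.2 hk).image _) <| by
    rintro _ ⟨j, hj, rfl⟩
    exact lamD_pow_div_le_lamInf hS hj.1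

theorem lamInf_le_asympDisp (hS : S.Finite) : lamInf S ≤ asympDisp S :=
  csSup_le (nonempty_Ici.image _) <| by
    rintro _ ⟨j, hj, rfl⟩
    exact lamD_pow_div_le_asympDisp hS hj

theorem lamInf_pow (hS : S.Finite) {k : ℕ} (hk : 0 < k) : lamInf (S ^ k) = k * lamInf S := by
  have hk' : (0 : ℝ) < k := by exact_mod_cast hk
  apply le_antisymm
  · refine csSup_le (nonempty_Ici.image _) ?_
    rintro _ ⟨j, hj, rfl⟩
    calc lamD ((S ^ k) ^ j) / j = k * (lamD (S ^ (k * j)) / (k * j : ℕ)) := by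
          push_cast
          rw [← pow_mul, ← mul_div_assoc, mul_div_mul_left _ _ hk'.ne']
      _ ≤ k * lamInf S := by
          gcongr
          exact lamD_pow_div_le_lamInf hS (Nat.mul_pos hk hj)
  · rw [← le_div_iff₀' hk']
    refine csSup_le (nonempty_Ici.image _) ?_
    rintro _ ⟨j, hj, rfl⟩
    calc lamD (S ^ j) / j ≤ lamD (S ^ (j * k)) / (j * k : ℕ) :=
          lamD_pow_div_le_lamD_pow_mul_div hS j hk
      _ = lamD ((S ^ k) ^ j) / j / k := by
          push_cast
          rw [← pow_mul, mul_comm j k, div_div, mul_comm (j : ℝ)]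
      _ ≤ lamInf (S ^ k) / k := by
          gcongr
          exact lamD_pow_div_le_lamInf (hS.pow k) hj

theorem lamInf_eq_limsup (hS : S.Finite) :
    lamInf S = limsup (fun n : ℕ => lamD (S ^ n) / n) atTop :=
  (limsup_eq_sSup_of_le_apply_mul (fun j _ hm => lamD_pow_div_le_lamD_pow_mul_div hS j hm)
    (bddAbove_lamD_pow_div hS)).symm

end Displacement

theorem general_nonsense_lemma_general {X : Type*} [MetricSpace X] (S : Set (X ≃ᵢ X))
    (hfin : S.Finite) (k : ℕ) (hk : 1 ≤ k) :
    (lamD S ≤ lamK k S ∧ lamK k S ≤ lamInf S ∧ lamInf S ≤ asympDisp S ∧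
      asympDisp S ≤ jointMinDisp (S ^ k) / k ∧ jointMinDisp (S ^ k) / k ≤ jointMinDisp S) ∧
    asympDisp (S ^ k) = k * asympDisp S ∧
    lamInf (S ^ k) = k * lamInf S ∧
    lamInf S = Filter.limsup (fun n : ℕ => lamD (S ^ n) / n) Filter.atTop := by
  have hk' : (0 : ℝ) < k := by exact_mod_cast hk
  refine ⟨⟨lamD_le_lamK hk, lamK_le_lamInf hfin hk, lamInf_le_asympDisp hfin, ?_, ?_⟩,
    asympDisp_pow hfin hk, lamInf_pow hfin hk, lamInf_eq_limsup hfin⟩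
  · rw [le_div_iff₀' hk', ← asympDisp_pow hfin hk]
    exact asympDisp_le_jointMinDisp (hfin.pow k)
  · rw [div_le_iff₀' hk']
    exact jointMinDisp_pow_le hfin k

/-- For any metric space `X` and finite set `S` of isometries of `X`, for
every `k ≥ 1` one has `λ(S) ≤ λ_k(S) ≤ λ_∞(S) ≤ ℓ(S) ≤ L(S^k)/k ≤ L(S)`; moreover
`ℓ(S^k) = k ℓ(S)`, `λ_∞(S^k) = k λ_∞(S)`, and `λ_∞(S) = limsup_n λ(S^n)/n`. -/
theorem general_nonsense_lemma {X : Type*} [MetricSpace X] (S : Set (X ≃ᵢ X))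
    (hfin : S.Finite) (hne : S.Nonempty) (k : ℕ) (hk : 1 ≤ k) :
    (lamD S ≤ lamK k S ∧ lamK k S ≤ lamInf S ∧ lamInf S ≤ asympDisp S ∧
      asympDisp S ≤ jointMinDisp (S ^ k) / k ∧ jointMinDisp (S ^ k) / k ≤ jointMinDisp S) ∧
    asympDisp (S ^ k) = k * asympDisp S ∧
    lamInf (S ^ k) = k * lamInf S ∧
    lamInf S = Filter.limsup (fun n : ℕ => lamD (S ^ n) / n) Filter.atTop :=
  general_nonsense_lemma_general S hfin k hk
end

section
/- Let X be a CAT(0) geodesic metric space and g an isometry of X. Then L(g) = ℓ(g). In particular L(g^n) = n·L(g) for every integer n ≥ 1, and for every point x ∈ X one has L(g) = lim_{n→∞} d(g^n·x, x)/n. -/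
open Pointwise Filter

/-! By Fekete's lemma the orbit rate `lim d(gⁿx, x)/n` exists and, by the triangle inequality,
is at most `L(g)`. In a CAT(0) space the midpoint `m` of `[x, h x]` satisfies
`d(m, h m) ≤ d(x, h² x)/2`, so `L(h²) ≥ 2 L(h)`; iterating, `L(g^(2^k)) ≥ 2^k L(g)`, so
along the subsequence `n = 2^k` the orbit rate is at least `L(g)`. Hence it equals `L(g)`,
and since it is also the infimum of `d(y, gⁿ y)/n`, we get `L(gⁿ) ≥ n L(g)`. -/

theorem exists_midpoint_of_geodesicSpace {X : Type*} [MetricSpace X] (hgeo : GeodesicSpace X)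
    (a b : X) : ∃ m : X, dist a m = dist a b / 2 ∧ dist m b = dist a b / 2 := by
  obtain ⟨-, f, hf0, hfd, hiso, -⟩ := hgeo a b
  have hd : 0 ≤ dist a b := dist_nonneg
  have hI : dist a b / 2 ∈ Set.Icc 0 (dist a b) := ⟨by linarith, by linarith⟩
  refine ⟨f (dist a b / 2), ?_, ?_⟩
  · have h := hiso 0 ⟨le_rfl, hd⟩ _ hI
    rw [hf0, zero_sub, abs_neg, abs_of_nonneg hI.1] at h
    exact h
  · have h := hiso _ hI _ ⟨hd, le_rfl⟩
    rw [hfd, abs_of_nonpos (by linarith)] at h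
    linarith

theorem CAT0.dist_midpoints_le {X : Type*} [MetricSpace X] (hcat : CAT0 X) {a b c m p : X}
    (ham : dist a m = dist a b / 2) (hmb : dist m b = dist a b / 2)
    (hbp : dist b p = dist b c / 2) (hpc : dist p c = dist b c / 2) :
    dist m p ≤ dist a c / 2 := by
  have hm := hcat p a b m ham hmb
  have hp := hcat a b c p hbp hpc
  rw [dist_comm p b, hbp, dist_comm p a] at hm
  rw [dist_comm m p]
  exact le_of_pow_le_pow_left₀ two_ne_zero (by positivity) (by nlinarith)

section TransLen

variable {X : Type*} [MetricSpace X]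

theorem transLen_le_dist (g : X ≃ᵢ X) (x : X) : transLen g ≤ dist x (g x) :=
  csInf_le ⟨0, by rintro _ ⟨y, rfl⟩; exact dist_nonneg⟩ ⟨x, rfl⟩

theorem le_transLen [Nonempty X] {g : X ≃ᵢ X} {a : ℝ} (h : ∀ x, a ≤ dist x (g x)) :
    a ≤ transLen g :=
  le_csInf (Set.range_nonempty _) (by rintro _ ⟨x, rfl⟩; exact h x)

theorem transLen_of_isEmpty [IsEmpty X] (g : X ≃ᵢ X) : transLen g = 0 := by
  rw [transLen, Set.range_eq_empty, Real.sInf_empty]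

theorem dist_pow_apply_le (g : X ≃ᵢ X) (x : X) (n : ℕ) :
    dist x ((g ^ n) x) ≤ n * dist x (g x) := by
  induction n with
  | zero => simp
  | succ n ih =>
    calc dist x ((g ^ (n + 1)) x) ≤ dist x ((g ^ n) x) + dist ((g ^ n) x) ((g ^ n) (g x)) :=
          dist_triangle _ _ _
      _ = dist x ((g ^ n) x) + dist x (g x) := by rw [(g ^ n).dist_eq]
      _ ≤ (n + 1 : ℕ) * dist x (g x) := by push_cast; linarith

theorem transLen_pow_le [Nonempty X] (g : X ≃ᵢ X) {n : ℕ} (hn : 1 ≤ n) :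
    transLen (g ^ n) ≤ n * transLen g := by
  have hn' : (0 : ℝ) < n := by exact_mod_cast hn
  rw [← div_le_iff₀' hn']
  refine le_transLen fun y => ?_
  rw [div_le_iff₀' hn']
  exact (transLen_le_dist _ y).trans (dist_pow_apply_le g y n)

theorem subadditive_dist_pow_apply (g : X ≃ᵢ X) (x : X) :
    Subadditive fun n => dist ((g ^ n) x) x := fun m n =>
  calc dist ((g ^ (m + n)) x) x
        ≤ dist ((g ^ m) ((g ^ n) x)) ((g ^ m) x) + dist ((g ^ m) x) x := by
          rw [pow_add]; exact dist_triangle _ _ _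
    _ = dist ((g ^ m) x) x + dist ((g ^ n) x) x := by rw [(g ^ m).dist_eq, add_comm]

theorem bddBelow_dist_pow_apply_div (g : X ≃ᵢ X) (x : X) :
    BddBelow (Set.range fun n : ℕ => dist ((g ^ n) x) x / n) :=
  ⟨0, by rintro _ ⟨n, rfl⟩; positivity⟩

theorem tendsto_dist_pow_apply_div (g : X ≃ᵢ X) (x : X) :
    Tendsto (fun n : ℕ => dist ((g ^ n) x) x / n) atTop
      (nhds (subadditive_dist_pow_apply g x).lim) :=
  (subadditive_dist_pow_apply g x).tendsto_lim (bddBelow_dist_pow_apply_div g x)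

theorem lim_dist_pow_apply_le_div (g : X ≃ᵢ X) (x : X) {n : ℕ} (hn : n ≠ 0) :
    (subadditive_dist_pow_apply g x).lim ≤ dist x ((g ^ n) x) / n := by
  rw [dist_comm]
  exact (subadditive_dist_pow_apply g x).lim_le_div (bddBelow_dist_pow_apply_div g x) hn

theorem lim_dist_pow_apply_le_dist (g : X ≃ᵢ X) (x y : X) :
    (subadditive_dist_pow_apply g x).lim ≤ dist y (g y) := by
  have hbound : Tendsto (fun n : ℕ => dist y (g y) + 2 * dist x y / n) atTop
      (nhds (dist y (g y))) := by
    simpa using tendsto_const_nhds.add (tendsto_const_div_atTop_nhds_zero_nat (2 * dist x y))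
  refine le_of_tendsto_of_tendsto (tendsto_dist_pow_apply_div g x) hbound ?_
  filter_upwards [eventually_gt_atTop 0] with n hn
  have hn' : (0 : ℝ) < n := by exact_mod_cast hn
  have horbit : dist ((g ^ n) x) x ≤ 2 * dist x y + n * dist y (g y) :=
    calc dist ((g ^ n) x) x ≤ dist ((g ^ n) x) ((g ^ n) y) + dist ((g ^ n) y) y + dist y x :=
          dist_triangle4 _ _ _ _
      _ ≤ dist x y + n * dist y (g y) + dist x y := by
          rw [(g ^ n).dist_eq, dist_comm ((g ^ n) y) y, dist_comm y x]
          gcongr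
          exact dist_pow_apply_le g y n
      _ = 2 * dist x y + n * dist y (g y) := by ring
  rw [div_le_iff₀ hn', add_mul, div_mul_cancel₀ _ hn'.ne']
  linarith

end TransLen

namespace CAT0

variable {X : Type*} [MetricSpace X] (hgeo : GeodesicSpace X) (hcat : CAT0 X)
include hgeo hcat

theorem two_mul_transLen_le_transLen_sq [Nonempty X] (h : X ≃ᵢ X) :
    2 * transLen h ≤ transLen (h ^ 2) := by
  refine le_transLen fun x => ?_
  obtain ⟨m, hxm, hmx⟩ := exists_midpoint_of_geodesicSpace hgeo x (h x)
  have hsq : (h ^ 2) x = h (h x) := by rw [pow_two]; rfl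
  have hmid : dist m (h m) ≤ dist x ((h ^ 2) x) / 2 := by
    rw [hsq]
    refine hcat.dist_midpoints_le hxm hmx ?_ ?_ <;> rw [h.dist_eq, h.dist_eq] <;> assumption
  linarith [transLen_le_dist h m]

theorem two_pow_mul_transLen_le [Nonempty X] (g : X ≃ᵢ X) (k : ℕ) :
    2 ^ k * transLen g ≤ transLen (g ^ 2 ^ k) := by
  induction k with
  | zero => simp
  | succ k ih =>
    calc 2 ^ (k + 1) * transLen g = 2 * (2 ^ k * transLen g) := by ring
      _ ≤ 2 * transLen (g ^ 2 ^ k) := by gcongr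
      _ ≤ transLen ((g ^ 2 ^ k) ^ 2) := two_mul_transLen_le_transLen_sq hgeo hcat _
      _ = transLen (g ^ 2 ^ (k + 1)) := by rw [← pow_mul, pow_succ]

theorem lim_dist_pow_apply_eq_transLen (g : X ≃ᵢ X) (x : X) :
    (subadditive_dist_pow_apply g x).lim = transLen g := by
  have : Nonempty X := ⟨x⟩
  refine le_antisymm (le_transLen (lim_dist_pow_apply_le_dist g x)) ?_
  have hdyadic := (tendsto_dist_pow_apply_div g x).comp
    (tendsto_pow_atTop_atTop_of_one_lt one_lt_two)
  refine ge_of_tendsto' hdyadic fun k => ?_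
  have hk : (0 : ℝ) < 2 ^ k := by positivity
  simp only [Function.comp_apply, Nat.cast_pow, Nat.cast_ofNat]
  rw [le_div_iff₀' hk, dist_comm]
  exact (two_pow_mul_transLen_le hgeo hcat g k).trans (transLen_le_dist _ x)

theorem transLen_pow [Nonempty X] (g : X ≃ᵢ X) {n : ℕ} (hn : 1 ≤ n) :
    transLen (g ^ n) = n * transLen g := by
  have hn' : (0 : ℝ) < n := by exact_mod_cast hn
  refine le_antisymm (transLen_pow_le g hn) (le_transLen fun y => ?_)
  rw [← le_div_iff₀' hn', ← lim_dist_pow_apply_eq_transLen hgeo hcat g y]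
  exact lim_dist_pow_apply_le_div g y (by omega)

end CAT0

/-- In a CAT(0) geodesic metric space, `L(g) = ℓ(g)` for every isometry `g`;
in particular `L(g^n) = n L(g)` for all `n ≥ 1`, and for every point `x`,
`d(g^n x, x)/n → L(g)`. -/
theorem transLen_eq_asympTransLen_of_CAT0 {X : Type*} [MetricSpace X]
    (hgeo : GeodesicSpace X) (hcat : CAT0 X) (g : X ≃ᵢ X) :
    transLen g = asympTransLen g ∧
    (∀ n : ℕ, 1 ≤ n → transLen (g ^ n) = n * transLen g) ∧
    ∀ x : X, Filter.Tendsto (fun n : ℕ => dist ((g ^ n) x) x / n) Filter.atTop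
      (nhds (transLen g)) := by
  have hpow : ∀ n : ℕ, 1 ≤ n → transLen (g ^ n) = n * transLen g := by
    intro n hn
    rcases isEmpty_or_nonempty X with _ | _
    · simp [transLen_of_isEmpty]
    · exact hcat.transLen_pow hgeo g hn
  refine ⟨?_, hpow, fun x => ?_⟩
  · have hconst : (fun n : ℕ => transLen (g ^ n) / n) =ᶠ[atTop] fun _ => transLen g := by
      filter_upwards [eventually_ge_atTop 1] with n hn
      rw [hpow n hn, mul_div_cancel_left₀ _ (by positivity)]
    rw [asympTransLen, limsup_congr hconst, limsup_const]
  · simpa only [hcat.lim_dist_pow_apply_eq_transLen hgeo] using tendsto_dist_pow_apply_div g x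
end

section
/- Let X be a CAT(0) geodesic metric space and S ⊆ Isom(X) a finite set of isometries. Then for every integer n ≥ 1, L(S^n) ≥ (√n / 2)·L(S·S⁻¹), where S·S⁻¹ := { s·t⁻¹ : s,t ∈ S }. In particular, if the identity belongs to S and S = S⁻¹, then L(S^n) ≥ (√n / 2)·L(S) for every n ≥ 1. -/
open Pointwise Filter

section BFAux

variable {X : Type*} [MetricSpace X]

private lemma bf_exists_mid (hgeo : GeodesicSpace X) (a b : X) :
    ∃ m : X, dist a m = dist a b / 2 ∧ dist m b = dist a b / 2 := by
  obtain ⟨s, f, h0, hd, hiso, -⟩ := hgeo a b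
  have hab : 0 ≤ dist a b := dist_nonneg
  refine ⟨f (dist a b / 2), ?_, ?_⟩
  · have h := hiso 0 ⟨le_refl _, hab⟩ (dist a b / 2) ⟨by linarith, by linarith⟩
    rw [h0] at h
    rw [h, abs_of_nonpos (by linarith)]; ring
  · have h := hiso (dist a b / 2) ⟨by linarith, by linarith⟩ (dist a b) ⟨hab, le_refl _⟩
    rw [hd] at h
    rw [h, abs_of_nonpos (by linarith)]; ring

/-- Displacement of the orbit `A x` seen from `z`. -/
private noncomputable def bfOrbDisp (A : Set (X ≃ᵢ X)) (x z : X) : ℝ :=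
  sSup ((fun w : X ≃ᵢ X => dist z (w x)) '' A)

/-- Circumradius (infimum of radii of centers) of the orbit `A x`. -/
private noncomputable def bfOrbRad (A : Set (X ≃ᵢ X)) (x : X) : ℝ :=
  sInf (Set.range (bfOrbDisp A x))

private lemma bf_le_orbDisp {A : Set (X ≃ᵢ X)} (hA : A.Finite) {w : X ≃ᵢ X}
    (hw : w ∈ A) (x z : X) : dist z (w x) ≤ bfOrbDisp A x z :=
  le_csSup (hA.image _).bddAbove ⟨w, hw, rfl⟩

private lemma bf_orbDisp_le {A : Set (X ≃ᵢ X)} (hne : A.Nonempty) {x z : X} {B : ℝ}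
    (h : ∀ w ∈ A, dist z (w x) ≤ B) : bfOrbDisp A x z ≤ B := by
  refine csSup_le (hne.image _) ?_
  rintro b ⟨w, hw, rfl⟩
  exact h w hw

private lemma bf_orbDisp_nonneg {A : Set (X ≃ᵢ X)} (hA : A.Finite) (hne : A.Nonempty)
    (x z : X) : 0 ≤ bfOrbDisp A x z := by
  obtain ⟨w, hw⟩ := hne
  exact dist_nonneg.trans (bf_le_orbDisp hA hw x z)

private lemma bf_orbRad_nonneg {A : Set (X ≃ᵢ X)} (hA : A.Finite) (hne : A.Nonempty)
    (x : X) : 0 ≤ bfOrbRad A x := by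
  refine Real.sInf_nonneg ?_
  rintro _ ⟨z, rfl⟩
  exact bf_orbDisp_nonneg hA hne x z

private lemma bf_orbRad_le {A : Set (X ≃ᵢ X)} (hA : A.Finite) (hne : A.Nonempty)
    (x z : X) : bfOrbRad A x ≤ bfOrbDisp A x z := by
  refine csInf_le ⟨0, ?_⟩ ⟨z, rfl⟩
  rintro _ ⟨y, rfl⟩
  exact bf_orbDisp_nonneg hA hne x y

private lemma bf_jointDispAt_eq (A : Set (X ≃ᵢ X)) (z : X) :
    jointDispAt A z = bfOrbDisp A z z := rfl

private lemma bf_jointMinDisp_le {A : Set (X ≃ᵢ X)} (hA : A.Finite) (hne : A.Nonempty)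
    (c : X) : jointMinDisp A ≤ jointDispAt A c := by
  refine csInf_le ⟨0, ?_⟩ ⟨c, rfl⟩
  rintro _ ⟨y, rfl⟩
  exact bf_orbDisp_nonneg hA hne y y

private lemma bf_jointMinDisp_nonneg {A : Set (X ≃ᵢ X)} (hA : A.Finite)
    (hne : A.Nonempty) : 0 ≤ jointMinDisp A := by
  rcases isEmpty_or_nonempty X with hX | hX
  · haveI := hX
    rw [jointMinDisp, Set.range_eq_empty, Real.sInf_empty]
  · refine Real.sInf_nonneg ?_
    rintro _ ⟨z, rfl⟩
    exact bf_orbDisp_nonneg hA hne z z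

private lemma bf_pow_finite {S : Set (X ≃ᵢ X)} (h : S.Finite) :
    ∀ n : ℕ, (S ^ n).Finite
  | 0 => by rw [pow_zero]; exact Set.finite_one
  | n + 1 => by rw [pow_succ]; exact (bf_pow_finite h n).mul h

private lemma bf_sqrt_four : Real.sqrt 4 = 2 := by
  rw [show (4 : ℝ) = 2 ^ 2 by norm_num, Real.sqrt_sq (by norm_num)]

/-- Key step: the squared circumradius of `S^{k+1} x` exceeds that of `S^k x` by
`L(S S⁻¹)² / 4`. -/
private lemma bf_key_step (hgeo : GeodesicSpace X) (hcat : CAT0 X)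
    {S : Set (X ≃ᵢ X)} (hfin : S.Finite) (hne : S.Nonempty) (x : X) (k : ℕ) :
    jointMinDisp (S * S⁻¹) ^ 2 / 4 + bfOrbRad (S ^ k) x ^ 2
      ≤ bfOrbRad (S ^ (k + 1)) x ^ 2 := by
  set ℓ := jointMinDisp (S * S⁻¹) with hℓdef
  set r := bfOrbRad (S ^ k) x with hrdef
  set R := bfOrbRad (S ^ (k + 1)) x with hRdef
  have hfin' : (S * S⁻¹).Finite := hfin.mul hfin.inv
  have hne' : (S * S⁻¹).Nonempty := hne.mul hne.inv
  have hfk : (S ^ k).Finite := bf_pow_finite hfin k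
  have hnk : (S ^ k).Nonempty := hne.pow
  have hfk1 : (S ^ (k + 1)).Finite := bf_pow_finite hfin (k + 1)
  have hnk1 : (S ^ (k + 1)).Nonempty := hne.pow
  have hℓ0 : 0 ≤ ℓ := bf_jointMinDisp_nonneg hfin' hne'
  have hr0 : 0 ≤ r := bf_orbRad_nonneg hfk hnk x
  have hR0 : 0 ≤ R := bf_orbRad_nonneg hfk1 hnk1 x
  have hsum0 : 0 ≤ ℓ ^ 2 / 4 + r ^ 2 := by positivity
  -- it suffices to bound the square root by `R + ε` for every `ε > 0`
  have main : ∀ ε : ℝ, 0 < ε → Real.sqrt (ℓ ^ 2 / 4 + r ^ 2) ≤ R + ε := by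
    intro ε hε
    -- an approximate circumcenter of `S^{k+1} x`
    obtain ⟨_, ⟨c, rfl⟩, hc⟩ :=
      Real.lt_sInf_add_pos (s := Set.range (bfOrbDisp (S ^ (k + 1)) x)) ⟨_, ⟨x, rfl⟩⟩ hε
    have hc' : bfOrbDisp (S ^ (k + 1)) x c ≤ R + ε := le_of_lt hc
    set E : ℝ := (R + ε) ^ 2 - r ^ 2 with hEdef
    -- each element of `S S⁻¹` displaces `c` by at most `2 √E`
    have claimA : ∀ h' ∈ S * S⁻¹, dist c (h' c) ≤ 2 * Real.sqrt E := by
      rintro h' hh'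
      rw [Set.mem_mul] at hh'
      obtain ⟨s, hs, u, hu, rfl⟩ := hh'
      rw [Set.mem_inv] at hu
      set t : X ≃ᵢ X := u⁻¹ with htdef
      have ht : t ∈ S := hu
      have hut : u = t⁻¹ := by rw [htdef, inv_inv]
      -- midpoint of `s⁻¹ c` and `t⁻¹ c`
      obtain ⟨m, hm1, hm2⟩ := bf_exists_mid hgeo (s⁻¹ c) (t⁻¹ c)
      set D : ℝ := dist (s⁻¹ c) (t⁻¹ c) with hDdef
      -- every orbit point `w x`, `w ∈ S^k`, satisfies the CAT(0) inequality at `m`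
      have hwbound : ∀ w ∈ S ^ k, dist (w x) m ^ 2 ≤ (R + ε) ^ 2 - D ^ 2 / 4 := by
        intro w hw
        have hcatw := hcat (w x) (s⁻¹ c) (t⁻¹ c) m hm1 hm2
        have hds : dist (w x) (s⁻¹ c) ≤ R + ε := by
          have h1 : dist (w x) (s⁻¹ c) = dist c ((s * w) x) := by
            rw [← s.dist_eq (w x) (s⁻¹ c), IsometryEquiv.apply_inv_self,
              ← IsometryEquiv.mul_apply]
            exact dist_comm _ _
          have hmem : s * w ∈ S ^ (k + 1) := by
            rw [pow_succ']
            exact Set.mul_mem_mul hs hw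
          rw [h1]
          exact (bf_le_orbDisp hfk1 hmem x c).trans hc'
        have hdt : dist (w x) (t⁻¹ c) ≤ R + ε := by
          have h1 : dist (w x) (t⁻¹ c) = dist c ((t * w) x) := by
            rw [← t.dist_eq (w x) (t⁻¹ c), IsometryEquiv.apply_inv_self,
              ← IsometryEquiv.mul_apply]
            exact dist_comm _ _
          have hmem : t * w ∈ S ^ (k + 1) := by
            rw [pow_succ']
            exact Set.mul_mem_mul ht hw
          rw [h1]
          exact (bf_le_orbDisp hfk1 hmem x c).trans hc'
        have hRε : (0 : ℝ) ≤ R + ε := by linarith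
        have h2 : dist (w x) (s⁻¹ c) ^ 2 ≤ (R + ε) ^ 2 :=
          pow_le_pow_left₀ dist_nonneg hds 2
        have h3 : dist (w x) (t⁻¹ c) ^ 2 ≤ (R + ε) ^ 2 :=
          pow_le_pow_left₀ dist_nonneg hdt 2
        rw [← hDdef] at hcatw
        linarith
      -- hence `r² ≤ (R+ε)² - D²/4`
      obtain ⟨w₀, hw₀⟩ := (hne.pow : (S ^ k).Nonempty)
      have hB0 : 0 ≤ (R + ε) ^ 2 - D ^ 2 / 4 :=
        (sq_nonneg _).trans (hwbound w₀ hw₀)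
      have hrm : r ≤ Real.sqrt ((R + ε) ^ 2 - D ^ 2 / 4) := by
        refine (bf_orbRad_le hfk hnk x m).trans (bf_orbDisp_le hnk ?_)
        intro w hw
        have h := Real.sqrt_le_sqrt (hwbound w hw)
        rw [Real.sqrt_sq dist_nonneg] at h
        rw [dist_comm]
        exact h
      have hr2 : r ^ 2 ≤ (R + ε) ^ 2 - D ^ 2 / 4 := by
        have := pow_le_pow_left₀ hr0 hrm 2
        rwa [Real.sq_sqrt hB0] at this
      have hE0 : 0 ≤ E := by rw [hEdef]; nlinarith [sq_nonneg D]
      have hD2 : D ^ 2 ≤ 4 * E := by rw [hEdef]; nlinarith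
      -- `D ≤ 2 √E`
      have hDle : D ≤ 2 * Real.sqrt E := by
        have h1 : D = Real.sqrt (D ^ 2) := (Real.sqrt_sq dist_nonneg).symm
        have h2 : Real.sqrt (D ^ 2) ≤ Real.sqrt (4 * E) := Real.sqrt_le_sqrt hD2
        have h3 : Real.sqrt (4 * E) = 2 * Real.sqrt E := by
          rw [Real.sqrt_mul (by norm_num) E, bf_sqrt_four]
        rw [h1, ← h3]; exact h2
      -- `dist c ((s t⁻¹) c) = D`
      have hdc : dist c ((s * u) c) = D := by
        rw [hDdef, hut, ← s.dist_eq (s⁻¹ c) (t⁻¹ c), IsometryEquiv.apply_inv_self,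
          ← IsometryEquiv.mul_apply]
      rw [hdc]; exact hDle
    -- `r ≤ R + ε` (an inverse translate of `c` is a center of `S^k x`)
    have hrRε : r ≤ R + ε := by
      obtain ⟨s₀, hs₀⟩ := hne
      refine (bf_orbRad_le hfk hnk x (s₀⁻¹ c)).trans (bf_orbDisp_le hnk ?_)
      intro w hw
      have h1 : dist (s₀⁻¹ c) (w x) = dist c ((s₀ * w) x) := by
        rw [← s₀.dist_eq (s₀⁻¹ c) (w x), IsometryEquiv.apply_inv_self,
          ← IsometryEquiv.mul_apply]
      have hmem : s₀ * w ∈ S ^ (k + 1) := by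
        rw [pow_succ']
        exact Set.mul_mem_mul hs₀ hw
      rw [h1]
      exact (bf_le_orbDisp hfk1 hmem x c).trans hc'
    have hE0 : 0 ≤ E := by rw [hEdef]; nlinarith
    -- conclude `ℓ ≤ 2 √E`, then square
    have hℓle : ℓ ≤ 2 * Real.sqrt E := by
      refine (bf_jointMinDisp_le hfin' hne' c).trans ?_
      rw [bf_jointDispAt_eq]
      exact bf_orbDisp_le hne' claimA
    have hℓ2 : ℓ ^ 2 ≤ 4 * E := by
      have h1 := pow_le_pow_left₀ hℓ0 hℓle 2
      have h2 : (2 * Real.sqrt E) ^ 2 = 4 * E := by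
        rw [mul_pow, Real.sq_sqrt hE0]; ring
      linarith [h1.trans_eq h2]
    have hfin2 : ℓ ^ 2 / 4 + r ^ 2 ≤ (R + ε) ^ 2 := by rw [hEdef] at hℓ2; linarith
    have := Real.sqrt_le_sqrt hfin2
    rwa [Real.sqrt_sq (by linarith : (0:ℝ) ≤ R + ε)] at this
  have hsqrtR : Real.sqrt (ℓ ^ 2 / 4 + r ^ 2) ≤ R :=
    le_of_forall_pos_le_add main
  have := pow_le_pow_left₀ (Real.sqrt_nonneg _) hsqrtR 2
  rwa [Real.sq_sqrt hsum0] at this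

/-- Iterating the key step: `r_n² ≥ n ℓ²/4`. -/
private lemma bf_key_iter (hgeo : GeodesicSpace X) (hcat : CAT0 X)
    {S : Set (X ≃ᵢ X)} (hfin : S.Finite) (hne : S.Nonempty) (x : X) :
    ∀ n : ℕ, (n : ℝ) * (jointMinDisp (S * S⁻¹) ^ 2 / 4) ≤ bfOrbRad (S ^ n) x ^ 2
  | 0 => by simp [sq_nonneg]
  | n + 1 => by
    have h1 := bf_key_iter hgeo hcat hfin hne x n
    have h2 := bf_key_step hgeo hcat hfin hne x n
    push_cast
    linarith

end BFAux

/-- In a CAT(0) geodesic space, `L(S^n) ≥ (√n/2) L(S·S⁻¹)` for every `n ≥ 1`;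
in particular if `1 ∈ S` and `S = S⁻¹` then `L(S^n) ≥ (√n/2) L(S)`. -/


theorem jointMinDisp_pow_ge_sqrt_of_CAT0 {X : Type*} [MetricSpace X]
    (hgeo : GeodesicSpace X) (hcat : CAT0 X) (S : Set (X ≃ᵢ X)) (hfin : S.Finite)
    (hne : S.Nonempty) :
    (∀ n : ℕ, 1 ≤ n →
      jointMinDisp (S ^ n) ≥ Real.sqrt n / 2 * jointMinDisp (S * S⁻¹)) ∧
    ((1 : X ≃ᵢ X) ∈ S → S = S⁻¹ → ∀ n : ℕ, 1 ≤ n →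
      jointMinDisp (S ^ n) ≥ Real.sqrt n / 2 * jointMinDisp S) := by
  have hfin' : (S * S⁻¹).Finite := hfin.mul hfin.inv
  have hne' : (S * S⁻¹).Nonempty := hne.mul hne.inv
  have part1 : ∀ n : ℕ, 1 ≤ n →
      jointMinDisp (S ^ n) ≥ Real.sqrt n / 2 * jointMinDisp (S * S⁻¹) := by
    intro n hn
    rcases isEmpty_or_nonempty X with hX | hX
    · haveI := hX
      have he : ∀ A : Set (X ≃ᵢ X), jointMinDisp A = 0 := by
        intro A
        rw [jointMinDisp, Set.range_eq_empty, Real.sInf_empty]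
      rw [ge_iff_le, he, he]
      simp
    · set ℓ := jointMinDisp (S * S⁻¹) with hℓdef
      have hℓ0 : 0 ≤ ℓ := bf_jointMinDisp_nonneg hfin' hne'
      rw [ge_iff_le]
      refine le_csInf ⟨_, ⟨Classical.arbitrary X, rfl⟩⟩ ?_
      rintro _ ⟨x, rfl⟩
      have hiter := bf_key_iter hgeo hcat hfin hne x n
      have hfn := bf_pow_finite hfin n
      have hnn : (S ^ n).Nonempty := hne.pow
      have hrle : bfOrbRad (S ^ n) x ≤ jointDispAt (S ^ n) x := by
        rw [bf_jointDispAt_eq]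
        exact bf_orbRad_le hfn hnn x x
      have hJ0 : 0 ≤ jointDispAt (S ^ n) x := bf_orbDisp_nonneg hfn hnn x x
      have h1 : (Real.sqrt n / 2 * ℓ) ^ 2 ≤ jointDispAt (S ^ n) x ^ 2 := by
        have hr2 : bfOrbRad (S ^ n) x ^ 2 ≤ jointDispAt (S ^ n) x ^ 2 :=
          pow_le_pow_left₀ (bf_orbRad_nonneg hfn hnn x) hrle 2
        have hs : (Real.sqrt n / 2 * ℓ) ^ 2 = (n : ℝ) * (ℓ ^ 2 / 4) := by
          rw [mul_pow, div_pow, Real.sq_sqrt (Nat.cast_nonneg n)]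
          ring
        rw [hs]
        linarith
      have h2 : 0 ≤ Real.sqrt n / 2 * ℓ := by positivity
      have h3 := Real.sqrt_le_sqrt h1
      rwa [Real.sqrt_sq h2, Real.sqrt_sq hJ0] at h3
  refine ⟨part1, ?_⟩
  intro h1S hSinv n hn
  have hmono : jointMinDisp S ≤ jointMinDisp (S * S⁻¹) := by
    rcases isEmpty_or_nonempty X with hX | hX
    · haveI := hX
      rw [jointMinDisp, jointMinDisp, Set.range_eq_empty, Set.range_eq_empty]
    · have hsub : S ⊆ S * S⁻¹ := by
        intro s hs
        have h1inv : (1 : X ≃ᵢ X) ∈ S⁻¹ := by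
          rw [← hSinv]
          exact h1S
        have h := Set.mul_mem_mul hs h1inv
        rwa [mul_one] at h
      refine le_csInf ⟨_, ⟨Classical.arbitrary X, rfl⟩⟩ ?_
      rintro _ ⟨x, rfl⟩
      refine (bf_jointMinDisp_le hfin hne x).trans ?_
      rw [bf_jointDispAt_eq, bf_jointDispAt_eq]
      refine bf_orbDisp_le hne ?_
      intro w hw
      exact bf_le_orbDisp hfin' (hsub hw) x x
  have h := part1 n hn
  have hs2 : 0 ≤ Real.sqrt n / 2 := by positivity
  have h4 := mul_le_mul_of_nonneg_left hmono hs2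
  rw [ge_iff_le]
  calc Real.sqrt n / 2 * jointMinDisp S ≤ Real.sqrt n / 2 * jointMinDisp (S * S⁻¹) := h4
  _ ≤ jointMinDisp (S ^ n) := h
end

section
/- Let X be a real tree (a geodesic metric space that is 0-hyperbolic) and let S ⊆ Isom(X) be a finite set of isometries. Then L(S) = ℓ(S) = λ₂(S), and L(S^n) = n·L(S) for every integer n ≥ 1. -/
open Pointwise Filter

namespace TreeWork

variable {X : Type*} [MetricSpace X]

/-- Gromov product. -/
noncomputable def gp (p a b : X) : ℝ := (dist p a + dist p b - dist a b) / 2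

/-- Metric betweenness. -/
def Bt (a m b : X) : Prop := dist a m + dist m b = dist a b

lemma gp_nonneg (p a b : X) : 0 ≤ gp p a b := by
  have h := dist_triangle a p b
  have h1 : dist a p = dist p a := dist_comm a p
  unfold gp; linarith

lemma gp_le (p a b : X) : gp p a b ≤ dist p a := by
  have h := dist_triangle p a b
  unfold gp; linarith

lemma gp_symm (p a b : X) : gp p a b = gp p b a := by
  unfold gp; rw [dist_comm a b]; ring_nf

lemma btw_symm {a m b : X} (h : Bt a m b) : Bt b m a := by
  unfold Bt at *; rw [dist_comm b m, dist_comm m a, dist_comm b a]; linarith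

lemma btw_left (a b : X) : Bt a a b := by unfold Bt; simp

lemma btw_right (a b : X) : Bt a b b := by unfold Bt; simp

/-- Existence of a point between `a` and `b` at prescribed distance. -/
lemma exists_btw (hgeo : GeodesicSpace X) (a b : X) (r : ℝ) (h0 : 0 ≤ r)
    (hr : r ≤ dist a b) : ∃ m, dist a m = r ∧ Bt a m b := by
  obtain ⟨s, f, hf0, hfD, hfiso, -⟩ := hgeo a b
  refine ⟨f r, ?_, ?_⟩
  · rw [← hf0, hfiso 0 ⟨le_refl 0, dist_nonneg⟩ r ⟨h0, hr⟩]
    rw [zero_sub, abs_neg, abs_of_nonneg h0]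
  · unfold Bt
    rw [← hf0, ← hfD, hfiso 0 ⟨le_refl 0, dist_nonneg⟩ r ⟨h0, hr⟩,
      hfiso r ⟨h0, hr⟩ (dist a b) ⟨dist_nonneg, le_refl _⟩,
      hfiso 0 ⟨le_refl 0, dist_nonneg⟩ (dist a b) ⟨dist_nonneg, le_refl _⟩]
    rw [zero_sub, abs_neg, abs_of_nonneg h0, abs_of_nonpos (by linarith),
      zero_sub, abs_neg, abs_of_nonneg dist_nonneg]
    ring

/-- Core construction: a geodesic from `a` to `b` on which, for every `c`, there is a
median point of the triangle `a b c`. -/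
lemma median_core (hgeo : GeodesicSpace X) (htree : GromovHyperbolic X 0) (a b : X) :
    ∃ f : ℝ → X, f 0 = a ∧ f (dist a b) = b ∧
      (∀ u ∈ Set.Icc (0:ℝ) (dist a b), ∀ v ∈ Set.Icc (0:ℝ) (dist a b),
        dist (f u) (f v) = |u - v|) ∧
      ∀ c : X, ∃ τ, 0 ≤ τ ∧ τ ≤ dist a b ∧
        dist b (f τ) + dist (f τ) c = dist b c ∧ dist c (f τ) + dist (f τ) a = dist c a := by
  obtain ⟨sab, hseg⟩ := hgeo a b
  obtain ⟨f, hf0, hfD, hfiso, hfset⟩ := hseg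
  refine ⟨f, hf0, hfD, hfiso, ?_⟩
  intro c
  set D := dist a b with hD
  obtain ⟨sbc, hsegbc⟩ := hgeo b c
  obtain ⟨sca, hsegca⟩ := hgeo c a
  obtain ⟨thin, -, -⟩ := htree a b c sab sbc sca ⟨f, hf0, hfD, hfiso, hfset⟩ hsegbc hsegca
  obtain ⟨g, hg0, hgD, hgiso, hgset⟩ := hsegbc
  obtain ⟨h, hh0, hhD, hhiso, hhset⟩ := hsegca
  have hclosed : ∀ (e : ℝ → X) (L : ℝ) (s : Set X),
      (∀ u ∈ Set.Icc (0:ℝ) L, ∀ v ∈ Set.Icc (0:ℝ) L, dist (e u) (e v) = |u - v|) →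
      s = e '' Set.Icc (0:ℝ) L → IsClosed s := by
    intro e L s hiso hset
    rw [hset]
    refine (isCompact_Icc.image_of_continuousOn ?_).isClosed
    refine LipschitzOnWith.continuousOn (K := 1) ?_
    rw [lipschitzOnWith_iff_dist_le_mul]
    intro u hu v hv
    rw [hiso u hu v hv, Real.dist_eq]
    simp
  have hclosed_bc : IsClosed sbc := hclosed g (dist b c) sbc hgiso hgset
  have hclosed_ca : IsClosed sca := hclosed h (dist c a) sca hhiso hhset
  have hbmem : b ∈ sbc := by
    rw [hgset]; exact ⟨0, ⟨le_refl 0, dist_nonneg⟩, hg0⟩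
  have hamem : a ∈ sca := by
    rw [hhset]; exact ⟨dist c a, ⟨dist_nonneg, le_refl _⟩, hhD⟩
  have hcover : ∀ t, t ∈ Set.Icc (0:ℝ) D → f t ∈ sbc ∨ f t ∈ sca := by
    intro t ht
    have hmem : f t ∈ sab := by rw [hfset]; exact ⟨t, ht, rfl⟩
    obtain ⟨y, hy, hdy⟩ := thin _ hmem
    have : f t = y := dist_le_zero.mp hdy
    rw [this]
    exact hy
  set K : Set ℝ := {t | t ∈ Set.Icc (0:ℝ) D ∧ f t ∈ sbc} with hK
  have hKne : K.Nonempty := ⟨D, ⟨dist_nonneg, le_refl _⟩, by rw [hfD]; exact hbmem⟩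
  have hKbdd : BddBelow K := ⟨0, fun t ht => ht.1.1⟩
  set τ := sInf K with hτ
  have hτ0 : 0 ≤ τ := le_csInf hKne (fun t ht => ht.1.1)
  have hτD : τ ≤ D := (csInf_le hKbdd hKne.some_mem).trans hKne.some_mem.1.2
  have hτIcc : τ ∈ Set.Icc (0:ℝ) D := ⟨hτ0, hτD⟩
  have hfbc : f τ ∈ sbc := by
    rw [← hclosed_bc.closure_eq]
    rw [Metric.mem_closure_iff]
    intro ε hε
    obtain ⟨t, htK, htlt⟩ := exists_lt_of_csInf_lt hKne (lt_add_of_pos_right τ (half_pos hε))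
    have hτt : τ ≤ t := csInf_le hKbdd htK
    refine ⟨f t, htK.2, ?_⟩
    rw [hfiso τ hτIcc t htK.1, abs_of_nonpos (by linarith)]
    linarith
  have hfca : f τ ∈ sca := by
    rcases eq_or_lt_of_le hτ0 with heq | hpos
    · rw [← heq, hf0]; exact hamem
    · rw [← hclosed_ca.closure_eq]
      rw [Metric.mem_closure_iff]
      intro ε hε
      set t := max 0 (τ - ε/2) with ht
      have ht0 : 0 ≤ t := le_max_left _ _
      have htτ : t < τ := max_lt hpos (by linarith)
      have htτ' : τ - ε/2 ≤ t := le_max_right _ _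
      have htIcc : t ∈ Set.Icc (0:ℝ) D := ⟨ht0, le_trans htτ.le hτD⟩
      have htnK : t ∉ K := fun hmem => absurd (csInf_le hKbdd hmem) (not_le.mpr htτ)
      have : f t ∈ sca := by
        rcases hcover t htIcc with h1 | h2
        · exact absurd ⟨htIcc, h1⟩ htnK
        · exact h2
      refine ⟨f t, this, ?_⟩
      rw [hfiso τ hτIcc t htIcc, abs_of_nonneg (by linarith)]
      linarith
  refine ⟨τ, hτ0, hτD, ?_, ?_⟩
  · rw [hgset] at hfbc
    obtain ⟨u, hu, huτ⟩ := hfbc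
    rw [← huτ, ← hg0, ← hgD,
      hgiso 0 ⟨le_refl 0, dist_nonneg⟩ u hu,
      hgiso u hu (dist b c) ⟨dist_nonneg, le_refl _⟩,
      hgiso 0 ⟨le_refl 0, dist_nonneg⟩ (dist b c) ⟨dist_nonneg, le_refl _⟩]
    rw [zero_sub, abs_neg, abs_of_nonneg hu.1, abs_of_nonpos (by linarith [hu.2]),
      zero_sub, abs_neg, abs_of_nonneg dist_nonneg]
    ring
  · rw [hhset] at hfca
    obtain ⟨w, hw, hwτ⟩ := hfca
    rw [← hwτ, ← hh0, ← hhD,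
      hhiso 0 ⟨le_refl 0, dist_nonneg⟩ w hw,
      hhiso w hw (dist c a) ⟨dist_nonneg, le_refl _⟩,
      hhiso 0 ⟨le_refl 0, dist_nonneg⟩ (dist c a) ⟨dist_nonneg, le_refl _⟩]
    rw [zero_sub, abs_neg, abs_of_nonneg hw.1, abs_of_nonpos (by linarith [hw.2]),
      zero_sub, abs_neg, abs_of_nonneg dist_nonneg]
    ring



/-- Median point of a triangle, with Gromov-product distances. -/
lemma median (hgeo : GeodesicSpace X) (htree : GromovHyperbolic X 0) (a b c : X) :
    ∃ m : X, dist a m = gp a b c ∧ dist b m = gp b a c ∧ dist c m = gp c a b ∧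
      Bt a m b ∧ Bt b m c ∧ Bt a m c := by
  obtain ⟨f, hf0, hfD, hfiso, hmed⟩ := median_core hgeo htree a b
  obtain ⟨τ, hτ0, hτD, h1, h2⟩ := hmed c
  set m := f τ with hm
  have ham : dist a m = τ := by
    rw [hm, ← hf0, hfiso 0 ⟨le_refl 0, dist_nonneg⟩ τ ⟨hτ0, hτD⟩, zero_sub, abs_neg,
      abs_of_nonneg hτ0]
  have key := hfiso τ ⟨hτ0, hτD⟩ (dist a b) ⟨dist_nonneg, le_refl _⟩
  rw [hfD] at key
  have hmb : dist m b = dist a b - τ := by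
    rw [hm, key, abs_of_nonpos (by linarith)]; ring
  have hcm : dist b m = dist m b := dist_comm b m
  have hcm2 : dist m c = dist c m := dist_comm m c
  have hcm3 : dist m a = dist a m := dist_comm m a
  have hca' : dist c a = dist a c := dist_comm c a
  have hcb : dist c b = dist b c := dist_comm c b
  have hba : dist b a = dist a b := dist_comm b a
  refine ⟨m, ?_, ?_, ?_, ?_, ?_, ?_⟩
  · simp only [gp]; linarith
  · simp only [gp]; linarith
  · simp only [gp]; linarith
  · simp only [Bt]; linarith
  · simp only [Bt]; linarith
  · simp only [Bt]; linarith

/-- The four-point condition (0-hyperbolicity). -/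
lemma fourpt (hgeo : GeodesicSpace X) (htree : GromovHyperbolic X 0) (a b c d : X) :
    dist a b + dist c d ≤ max (dist a c + dist b d) (dist a d + dist b c) := by
  obtain ⟨f, hf0, hfD, hfiso, hmed⟩ := median_core hgeo htree a b
  obtain ⟨τ₁, hτ₁0, hτ₁D, hbc1, hca1⟩ := hmed c
  obtain ⟨τ₂, hτ₂0, hτ₂D, hbd2, hda2⟩ := hmed d
  have h12 : dist (f τ₁) (f τ₂) = |τ₁ - τ₂| := hfiso τ₁ ⟨hτ₁0, hτ₁D⟩ τ₂ ⟨hτ₂0, hτ₂D⟩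
  have ha1 : dist a (f τ₁) = τ₁ := by
    rw [← hf0, hfiso 0 ⟨le_refl 0, dist_nonneg⟩ τ₁ ⟨hτ₁0, hτ₁D⟩, zero_sub, abs_neg,
      abs_of_nonneg hτ₁0]
  have ha2 : dist a (f τ₂) = τ₂ := by
    rw [← hf0, hfiso 0 ⟨le_refl 0, dist_nonneg⟩ τ₂ ⟨hτ₂0, hτ₂D⟩, zero_sub, abs_neg,
      abs_of_nonneg hτ₂0]
  have key1 := hfiso τ₁ ⟨hτ₁0, hτ₁D⟩ (dist a b) ⟨dist_nonneg, le_refl _⟩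
  rw [hfD] at key1
  have hb1 : dist (f τ₁) b = dist a b - τ₁ := by
    rw [key1, abs_of_nonpos (by linarith)]; ring
  have key2 := hfiso τ₂ ⟨hτ₂0, hτ₂D⟩ (dist a b) ⟨dist_nonneg, le_refl _⟩
  rw [hfD] at key2
  have hb2 : dist (f τ₂) b = dist a b - τ₂ := by
    rw [key2, abs_of_nonpos (by linarith)]; ring
  have tri : dist c d ≤ dist c (f τ₁) + dist (f τ₁) (f τ₂) + dist (f τ₂) d := by
    calc dist c d ≤ dist c (f τ₂) + dist (f τ₂) d := dist_triangle _ _ _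
    _ ≤ (dist c (f τ₁) + dist (f τ₁) (f τ₂)) + dist (f τ₂) d := by
        have := dist_triangle c (f τ₁) (f τ₂); linarith
  have e1 : dist b (f τ₁) = dist (f τ₁) b := dist_comm _ _
  have e2 : dist b (f τ₂) = dist (f τ₂) b := dist_comm _ _
  have e3 : dist c (f τ₁) = dist (f τ₁) c := dist_comm _ _
  have e4 : dist d (f τ₂) = dist (f τ₂) d := dist_comm _ _
  have e5 : dist (f τ₁) a = dist a (f τ₁) := dist_comm _ _
  have e6 : dist (f τ₂) a = dist a (f τ₂) := dist_comm _ _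
  have e7 : dist c a = dist a c := dist_comm _ _
  have e8 : dist d a = dist a d := dist_comm _ _
  rcases le_total τ₁ τ₂ with hle | hle
  · rw [abs_of_nonpos (by linarith)] at h12
    refine le_max_iff.mpr (Or.inr ?_)
    linarith
  · rw [abs_of_nonneg (by linarith)] at h12
    refine le_max_iff.mpr (Or.inl ?_)
    linarith

/-- Gromov product inequality for 0-hyperbolic spaces. -/
lemma gp_min (hgeo : GeodesicSpace X) (htree : GromovHyperbolic X 0) (p a b c : X) :
    min (gp p a b) (gp p b c) ≤ gp p a c := by
  have h := fourpt hgeo htree a c p b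
  have e1 : dist a p = dist p a := dist_comm _ _
  have e2 : dist c b = dist b c := dist_comm _ _
  have e3 : dist c p = dist p c := dist_comm _ _
  have e4 : dist p b = dist p b := rfl
  rcases le_max_iff.mp h with h' | h'
  · refine min_le_of_right_le ?_
    simp only [gp]; linarith
  · refine min_le_of_left_le ?_
    simp only [gp]; linarith

/-- Two points between `a` and `b` are at distance the difference of parameters. -/
lemma bt_dist (hgeo : GeodesicSpace X) (htree : GromovHyperbolic X 0) {a b m m' : X}
    (h : Bt a m b) (h' : Bt a m' b) : dist m m' = |dist a m - dist a m'| := by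
  have h4 := fourpt hgeo htree m m' a b
  have t1 := dist_triangle a m m'
  have t2 := dist_triangle a m' m
  have e0 : dist m' m = dist m m' := dist_comm _ _
  have e1 : dist m a = dist a m := dist_comm _ _
  have e2 : dist m' a = dist a m' := dist_comm _ _
  simp only [Bt] at h h'
  refine le_antisymm ?_ (abs_sub_le_iff.mpr ⟨by linarith, by linarith⟩)
  rcases le_max_iff.mp h4 with h5 | h5
  · have : dist m m' ≤ dist a m - dist a m' := by linarith
    exact this.trans (le_abs_self _)
  · have h6 : dist m m' ≤ dist a m' - dist a m := by linarith
    calc dist m m' ≤ dist a m' - dist a m := h6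
    _ = -(dist a m - dist a m') := by ring
    _ ≤ |dist a m - dist a m'| := neg_le_abs _

/-- Projection formula: distance from a point to a between-point. -/
lemma proj (hgeo : GeodesicSpace X) (htree : GromovHyperbolic X 0) (p : X) {a b y : X}
    (h : Bt a y b) : dist p y = gp p a b + |dist a y - gp a b p| := by
  obtain ⟨m, hma, hmb, hmp, hb1, hb2, hb3⟩ := median hgeo htree a b p
  have hym : dist y m = |dist a y - dist a m| := bt_dist hgeo htree h hb1
  have t1 := dist_triangle p m y
  have t2 := dist_triangle p y a
  have t3 := dist_triangle p y b
  have e1 : dist m y = dist y m := dist_comm _ _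
  have e2 : dist y a = dist a y := dist_comm _ _
  have e3 : dist y b = dist y b := rfl
  have e4 : dist p m = dist m p := dist_comm p m
  have hpm : dist m p = gp p a b := by rw [dist_comm m p]; exact hmp
  simp only [Bt] at h
  have c1 : dist b a = dist a b := dist_comm b a
  have c2 : dist a p = dist p a := dist_comm a p
  have c3 : dist b p = dist p b := dist_comm b p
  have hsum : gp a b p + gp b a p = dist a b := by simp only [gp]; linarith
  have hpa : dist p a = gp p a b + gp a b p := by simp only [gp]; linarith
  have hpb : dist p b = gp p a b + gp b a p := by simp only [gp]; linarith
  rw [hma] at hym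
  rw [e1, hym] at t1
  rcases le_total (dist a y) (gp a b p) with hc | hc
  · rw [abs_of_nonpos (by linarith)] at t1 ⊢
    refine le_antisymm (by linarith) (by linarith)
  · rw [abs_of_nonneg (by linarith)] at t1 ⊢
    refine le_antisymm (by linarith) (by linarith)

lemma bt_unique (hgeo : GeodesicSpace X) (htree : GromovHyperbolic X 0) {a b m m' : X}
    (h : Bt a m b) (h' : Bt a m' b) (he : dist a m = dist a m') : m = m' :=
  dist_eq_zero.mp (by rw [bt_dist hgeo htree h h', he, sub_self, abs_zero])

/-- Transport of betweenness by an isometry. -/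
lemma bt_map (g : X ≃ᵢ X) {a m b : X} (h : Bt a m b) : Bt (g a) (g m) (g b) := by
  simp only [Bt, IsometryEquiv.dist_eq]; exact h

/-- Moving from `z` towards `g z` by `δ ≤ d(z,gz)/2` decreases the displacement to
`max (d(z,gz) - 2δ) (d(z,g²z) - d(z,gz))₊`. -/
lemma move (hgeo : GeodesicSpace X) (htree : GromovHyperbolic X 0) (g : X ≃ᵢ X) {z v : X}
    {δ : ℝ} (hb : Bt z v (g z)) (hδ : dist z v = δ) (h2 : 2*δ ≤ dist z (g z)) :
    dist v (g v) ≤ max (dist z (g z) - 2*δ) (max 0 (dist z (g (g z)) - dist z (g z))) := by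
  have hδ0 : 0 ≤ δ := hδ ▸ dist_nonneg
  set Q := dist z (g z) with hQdef
  have hgzz : dist (g z) (g (g z)) = Q := g.dist_eq z (g z)
  have ht0 : 0 ≤ gp (g z) z (g (g z)) := gp_nonneg _ _ _
  have htQ : gp (g z) z (g (g z)) ≤ Q := by
    have h := gp_le (g z) z (g (g z)); rwa [dist_comm (g z) z] at h
  set t := gp (g z) z (g (g z)) with htdef
  have hzgg : dist z (g (g z)) = 2*Q - 2*t := by
    have h := htdef
    simp only [gp] at h
    rw [dist_comm (g z) z, hgzz] at h
    linarith
  have hvgz : dist v (g z) = Q - δ := by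
    have hb' := hb; simp only [Bt] at hb'; linarith
  have hgb : Bt (g z) (g v) (g (g z)) := bt_map g hb
  have hgvδ : dist (g z) (g v) = δ := by rw [g.dist_eq]; exact hδ
  have hW := proj hgeo htree (g (g z)) hb
  have e1 : gp (g (g z)) z (g z) = Q - t := by
    simp only [gp]; rw [dist_comm (g (g z)) z, hzgg, dist_comm (g (g z)) (g z), hgzz]; ring
  have e2 : gp z (g z) (g (g z)) = Q - t := by
    simp only [gp]; rw [hzgg, hgzz]; ring
  rw [e1, e2, hδ] at hW
  have hproj2 := proj hgeo htree v hgb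
  rw [hgvδ] at hproj2
  have hcW : dist v (g (g z)) = dist (g (g z)) v := dist_comm _ _
  -- goal bound target
  have hgoal2 : dist z (g (g z)) - Q = Q - 2*t := by linarith
  rcases le_or_gt δ (Q - t) with hA | hB
  · -- W = 2(Q-t) - δ
    have hWval : dist (g (g z)) v = 2*(Q-t) - δ := by
      rw [hW, abs_of_nonpos (by linarith)]; ring
    have g3 : gp v (g z) (g (g z)) = Q - t - δ := by
      simp only [gp]; rw [hvgz, hcW, hWval, hgzz]; ring
    have g4 : gp (g z) (g (g z)) v = t := by
      simp only [gp]; rw [hgzz, dist_comm (g z) v, hvgz, hWval]; ring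
    rw [g3, g4] at hproj2
    rcases le_or_gt δ t with hAA | hAB
    · rw [abs_of_nonpos (by linarith)] at hproj2
      refine le_max_iff.mpr (Or.inl ?_); linarith
    · rw [abs_of_nonneg (by linarith)] at hproj2
      refine le_max_iff.mpr (Or.inr (le_max_iff.mpr (Or.inr ?_))); linarith
  · -- W = δ
    have hWval : dist (g (g z)) v = δ := by
      rw [hW, abs_of_nonneg (by linarith)]; ring
    have g3 : gp v (g z) (g (g z)) = 0 := by
      simp only [gp]; rw [hvgz, hcW, hWval, hgzz]; ring
    have g4 : gp (g z) (g (g z)) v = Q - δ := by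
      simp only [gp]; rw [hgzz, dist_comm (g z) v, hvgz, hWval]; ring
    rw [g3, g4] at hproj2
    rw [abs_of_nonpos (by linarith)] at hproj2
    refine le_max_iff.mpr (Or.inl ?_); linarith

/-- Core single-isometry lemma on trees: if `c := d(z,g²z) - d(z,gz) > 0` then there is a
point `q` with `d(q,gq) = c` and `d(z,gⁿz) ≥ n c` for all `n`. -/
lemma single_core (hgeo : GeodesicSpace X) (htree : GromovHyperbolic X 0) (g : X ≃ᵢ X) (z : X)
    (hc : 0 < dist z (g (g z)) - dist z (g z)) :
    ∃ q, dist q (g q) = dist z (g (g z)) - dist z (g z) ∧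
      ∀ n : ℕ, (n : ℝ) * (dist z (g (g z)) - dist z (g z)) ≤ dist z ((g^n) z) := by
  have hdist_g : ∀ (x y : X), dist (g x) (g y) = dist x y := fun x y => g.dist_eq x y
  have hpow1 : ∀ (k : ℕ) (x : X), (g^(k+1)) x = g ((g^k) x) := by
    intro k x; rw [pow_succ']; rfl
  have hpow2 : ∀ (k : ℕ) (x : X), (g^(k+1)) x = (g^k) (g x) := by
    intro k x; rw [pow_succ]; rfl
  set D := dist z (g z) with hD
  have hgzz : dist (g z) (g (g z)) = D := hdist_g z (g z)
  have ht0 : 0 ≤ gp (g z) z (g (g z)) := gp_nonneg _ _ _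
  set t := gp (g z) z (g (g z)) with htdef
  have hzgg : dist z (g (g z)) = 2*D - 2*t := by
    have h := htdef; simp only [gp] at h; rw [dist_comm (g z) z, hgzz] at h; linarith
  set c := D - 2*t with hcdef
  have hcpos : 0 < c := by rw [hzgg] at hc; linarith
  have hgoal_c : dist z (g (g z)) - D = c := by rw [hzgg]; ring
  rw [hgoal_c]
  have htD : 2*t < D := by linarith
  obtain ⟨q, hq1, hq2⟩ := exists_btw hgeo z (g z) (D - t) (by linarith) (by rw [← hD]; linarith)
  have hqgz : dist q (g z) = t := by
    have h := hq2; simp only [Bt] at h; rw [hq1, ← hD] at h; linarith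
  obtain ⟨m, A1, A2, A3, B1, B2, B3⟩ := median hgeo htree z (g z) (g (g z))
  have e2 : gp z (g z) (g (g z)) = D - t := by
    simp only [gp]; rw [hzgg, hgzz, ← hD]; ring
  have e1 : gp (g (g z)) z (g z) = D - t := by
    simp only [gp]
    rw [dist_comm (g (g z)) z, hzgg, dist_comm (g (g z)) (g z), hgzz, ← hD]; ring
  have hqm : q = m := bt_unique hgeo htree hq2 B1 (by rw [hq1, A1, e2])
  rw [← hqm] at A2 A3 B2 B3
  rw [← htdef] at A2
  rw [e1] at A3
  have A3' : dist q (g (g z)) = D - t := by rw [dist_comm]; exact A3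
  -- the translate g q
  have hgq1 : dist (g z) (g q) = D - t := by rw [hdist_g]; exact hq1
  have hgq2 : dist (g q) (g (g z)) = t := (hdist_g q (g z)).trans hqgz
  have hgqB : Bt (g z) (g q) (g (g z)) := bt_map g hq2
  have f3 : dist q (g q) = c := by
    have h := bt_dist hgeo htree B2 hgqB
    rw [A2, hgq1, abs_of_nonpos (by linarith)] at h
    rw [h]; ring
  have f4 : dist z (g q) = (D - t) + c := by
    refine le_antisymm ?_ ?_
    · have h := dist_triangle z q (g q); rw [hq1, f3] at h; exact h
    · have h := dist_triangle z (g q) (g (g z)); rw [hzgg, hgq2] at h; linarith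
  have gp0 : gp q z (g q) = 0 := by
    simp only [gp]; rw [dist_comm q z, hq1, f3, f4]; ring
  -- second iterate facts
  have hx13 : dist (g z) (g (g (g z))) = 2*D - 2*t := (hdist_g z (g (g z))).trans hzgg
  have hq1x3 : dist (g q) (g (g (g z))) = D - t := (hdist_g q (g (g z))).trans A3'
  have hq2x3 : dist (g (g q)) (g (g (g z))) = t := (hdist_g (g q) (g (g z))).trans hgq2
  have hq1q2 : dist (g q) (g (g q)) = c := (hdist_g q (g q)).trans f3
  have dqx3 : dist q (g (g (g z))) = 2*D - 3*t := by
    refine le_antisymm ?_ ?_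
    · have h := dist_triangle q (g q) (g (g (g z))); rw [f3, hq1x3] at h; linarith
    · have h := dist_triangle (g z) q (g (g (g z))); rw [A2, hx13] at h; linarith
  have dq2x1 : dist (g z) (g (g q)) = 2*D - 3*t := by
    refine le_antisymm ?_ ?_
    · have h := dist_triangle (g z) (g q) (g (g q)); rw [hgq1, hq1q2] at h; linarith
    · have h := dist_triangle (g z) (g (g q)) (g (g (g z))); rw [hq2x3] at h
      rw [hx13] at h; linarith
  have btq : Bt (g z) q (g (g (g z))) := by
    simp only [Bt]; rw [dist_comm (g z) q, hqgz, dqx3, hx13]; ring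
  have btq2 : Bt (g z) (g (g q)) (g (g (g z))) := by
    simp only [Bt]; rw [dq2x1, hq2x3, hx13]; ring
  have I2 : dist q (g (g q)) = 2*c := by
    have h := bt_dist hgeo htree btq btq2
    rw [dist_comm (g z) q, hqgz, dq2x1, abs_of_nonpos (by linarith)] at h
    rw [h]; ring
  have I2' : dist q ((g^2) q) = 2*c := by
    have h : (g^2) q = g (g q) := by rw [hpow1 1 q, pow_one]
    rw [h]; exact I2
  have gpkey : gp (g q) q (g (g q)) = 0 := by
    simp only [gp]; rw [dist_comm (g q) q, f3, hq1q2, I2]; ring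
  -- the main induction for dist q (gᵏ q) = k c
  have Istep : ∀ k : ℕ, dist q ((g^(k+1)) q) = ((k:ℝ)+1)*c →
      dist q ((g^(k+2)) q) = ((k:ℝ)+2)*c → dist q ((g^(k+3)) q) = ((k:ℝ)+3)*c := by
    intro k h1 h2
    have T1 : dist (g q) ((g^(k+3)) q) = ((k:ℝ)+2)*c := by
      rw [hpow1 (k+2) q, hdist_g]; exact h2
    have T2 : dist (g (g q)) ((g^(k+3)) q) = ((k:ℝ)+1)*c := by
      have h : (g^(k+3)) q = g (g ((g^(k+1)) q)) := by rw [hpow1 (k+2) q, hpow1 (k+1) q]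
      rw [h, hdist_g, hdist_g]; exact h1
    have gpc : gp (g q) ((g^(k+3)) q) (g (g q)) = c := by
      simp only [gp]
      rw [T1, hq1q2, dist_comm ((g^(k+3)) q) (g (g q)), T2]; ring
    have hmin := gp_min hgeo htree (g q) q ((g^(k+3)) q) (g (g q))
    rw [gpkey, gpc] at hmin
    have hz : gp (g q) q ((g^(k+3)) q) ≤ 0 := by
      rcases min_le_iff.mp hmin with h | h
      · exact h
      · linarith
    have hz0 : gp (g q) q ((g^(k+3)) q) = 0 := le_antisymm hz (gp_nonneg _ _ _)
    simp only [gp] at hz0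
    rw [dist_comm (g q) q, f3, T1] at hz0
    ring_nf at hz0 ⊢
    linarith
  have Ipair : ∀ k : ℕ, dist q ((g^(k+1)) q) = ((k:ℝ)+1)*c ∧
      dist q ((g^(k+2)) q) = ((k:ℝ)+2)*c := by
    intro k
    induction k with
    | zero =>
      constructor
      · rw [pow_one, f3]; push_cast; ring
      · rw [I2']; push_cast; ring
    | succ n ih =>
      constructor
      · rw [show n+1+1 = n+2 from rfl, ih.2]; push_cast; ring
      · have h := Istep n ih.1 ih.2
        rw [show n+1+2 = n+3 from rfl, h]; push_cast; ring
  have Ifact : ∀ k : ℕ, dist q ((g^k) q) = (k:ℝ)*c := by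
    intro k
    cases k with
    | zero => simp
    | succ n =>
      have h := (Ipair n).1
      rw [h]; push_cast; ring
  have Jfact : ∀ k : ℕ, dist z ((g^k) q) = (D - t) + (k:ℝ)*c := by
    intro k
    cases k with
    | zero => simpa using hq1
    | succ n =>
      have Tn : dist (g q) ((g^(n+1)) q) = (n:ℝ)*c := by
        rw [hpow1 n q, hdist_g]; exact Ifact n
      have gpc : gp q ((g^(n+1)) q) (g q) = c := by
        simp only [gp]
        rw [(Ipair n).1, f3, dist_comm ((g^(n+1)) q) (g q), Tn]; ring
      have hmin := gp_min hgeo htree q z ((g^(n+1)) q) (g q)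
      rw [gp0, gpc] at hmin
      have hz : gp q z ((g^(n+1)) q) ≤ 0 := by
        rcases min_le_iff.mp hmin with h | h
        · exact h
        · linarith
      have hz0 : gp q z ((g^(n+1)) q) = 0 := le_antisymm hz (gp_nonneg _ _ _)
      simp only [gp] at hz0
      rw [dist_comm q z, hq1, (Ipair n).1] at hz0
      push_cast
      ring_nf at hz0 ⊢
      linarith
  refine ⟨q, f3, ?_⟩
  intro n
  cases n with
  | zero => simp
  | succ k =>
    have h1 : dist ((g^(k+1)) z) ((g^k) q) = t := by
      rw [hpow2 k z, (g^k).dist_eq (g z) q]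
      exact A2
    have h2 := dist_triangle z ((g^(k+1)) z) ((g^k) q)
    rw [h1, Jfact k] at h2
    push_cast
    ring_nf at h2 ⊢
    linarith

/-- Elliptic case: if `d(z,g²z) ≤ d(z,gz)` then `g` has a fixed point (the midpoint). -/
lemma elliptic (hgeo : GeodesicSpace X) (htree : GromovHyperbolic X 0) (g : X ≃ᵢ X) (z : X)
    (hc : dist z (g (g z)) - dist z (g z) ≤ 0) : ∃ m : X, dist m (g m) = 0 := by
  have hdist_g : ∀ (x y : X), dist (g x) (g y) = dist x y := fun x y => g.dist_eq x y
  set D := dist z (g z) with hD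
  have hgzz : dist (g z) (g (g z)) = D := hdist_g z (g z)
  set t := gp (g z) z (g (g z)) with htdef
  have hzgg : dist z (g (g z)) = 2*D - 2*t := by
    have h := htdef; simp only [gp] at h; rw [dist_comm (g z) z, hgzz] at h; linarith
  have htD : D ≤ 2*t := by rw [hzgg] at hc; linarith
  have hD0 : 0 ≤ D := dist_nonneg
  obtain ⟨m, hm1, hm2⟩ := exists_btw hgeo z (g z) (D/2) (by linarith) (by rw [← hD]; linarith)
  have hmgz : dist m (g z) = D/2 := by
    have h := hm2; simp only [Bt] at h; rw [hm1, ← hD] at h; linarith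
  have hgmB : Bt (g z) (g m) (g (g z)) := bt_map g hm2
  have hgmd : dist (g z) (g m) = D/2 := by rw [hdist_g]; exact hm1
  have e2 : gp z (g z) (g (g z)) = D - t := by
    simp only [gp]; rw [hzgg, hgzz, ← hD]; ring
  have e4 : gp (g z) (g (g z)) z = t := by
    simp only [gp]
    rw [hgzz, dist_comm (g z) z, ← hD, dist_comm (g (g z)) z, hzgg]; ring
  have hzgm : dist z (g m) = D/2 := by
    have hp := proj hgeo htree z hgmB
    rw [hgmd, e2, e4, abs_of_nonpos (by linarith)] at hp
    rw [hp]; ring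
  have btzgm : Bt z (g m) (g z) := by
    simp only [Bt]
    rw [hzgm, dist_comm (g m) (g z), hgmd, ← hD]; ring
  refine ⟨m, ?_⟩
  rw [bt_dist hgeo htree hm2 btzgm, hm1, hzgm, sub_self, abs_zero]

lemma pow_apply_succ (g : X ≃ᵢ X) (k : ℕ) (x : X) : (g^(k+1)) x = g ((g^k) x) := by
  rw [pow_succ']; rfl

lemma pow_apply_succ' (g : X ≃ᵢ X) (k : ℕ) (x : X) : (g^(k+1)) x = (g^k) (g x) := by
  rw [pow_succ]; rfl

lemma dist_pow_le (g : X ≃ᵢ X) (x : X) : ∀ n : ℕ, dist x ((g^n) x) ≤ n * dist x (g x) := by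
  intro n; induction n with
  | zero => simp
  | succ k ih =>
    have h := dist_triangle x (g x) ((g^(k+1)) x)
    have h2 : dist (g x) ((g^(k+1)) x) = dist x ((g^k) x) := by
      rw [pow_apply_succ, g.dist_eq]
    rw [h2] at h
    push_cast
    have := ih
    calc dist x ((g^(k+1)) x) ≤ dist x (g x) + dist x ((g^k) x) := h
    _ ≤ dist x (g x) + (k:ℝ) * dist x (g x) := by linarith
    _ = ((k:ℝ)+1) * dist x (g x) := by ring

end TreeWork


namespace TreeWork

variable {X : Type*} [MetricSpace X]

lemma transLen_nonneg (g : X ≃ᵢ X) : 0 ≤ transLen g :=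
  Real.sInf_nonneg (by rintro x ⟨y, rfl⟩; exact dist_nonneg)

lemma transLen_le (g : X ≃ᵢ X) (x : X) : transLen g ≤ dist x (g x) :=
  csInf_le ⟨0, by rintro y ⟨w, rfl⟩; exact dist_nonneg⟩ ⟨x, rfl⟩

lemma le_transLen [Nonempty X] (g : X ≃ᵢ X) (b : ℝ) (h : ∀ x, b ≤ dist x (g x)) :
    b ≤ transLen g :=
  le_csInf (Set.range_nonempty _) (by rintro y ⟨w, rfl⟩; exact h w)

lemma transLen_exists_lt [Nonempty X] (g : X ≃ᵢ X) {ε : ℝ} (hε : 0 < ε) :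
    ∃ x, dist x (g x) < transLen g + ε := by
  obtain ⟨y, ⟨x, rfl⟩, hy⟩ :=
    exists_lt_of_csInf_lt (Set.range_nonempty _) (lt_add_of_pos_right (transLen g) hε)
  exact ⟨x, hy⟩

lemma transLen_pow_ge (hgeo : GeodesicSpace X) (htree : GromovHyperbolic X 0) [Nonempty X]
    (g : X ≃ᵢ X) (n : ℕ) : (n:ℝ) * transLen g ≤ transLen (g^n) := by
  apply le_transLen
  intro z
  rcases le_or_gt (dist z (g (g z)) - dist z (g z)) 0 with hc | hc
  · obtain ⟨m, hm⟩ := elliptic hgeo htree g z hc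
    have h0 : transLen g ≤ 0 := (transLen_le g m).trans_eq hm
    have h1 : transLen g = 0 := le_antisymm h0 (transLen_nonneg g)
    rw [h1, mul_zero]; exact dist_nonneg
  · obtain ⟨q, hq, hK⟩ := single_core hgeo htree g z hc
    have hle : transLen g ≤ dist z (g (g z)) - dist z (g z) := (transLen_le g q).trans_eq hq
    calc (n:ℝ) * transLen g ≤ (n:ℝ) * (dist z (g (g z)) - dist z (g z)) :=
          mul_le_mul_of_nonneg_left hle (Nat.cast_nonneg n)
    _ ≤ dist z ((g^n) z) := hK n

lemma transLen_pow_le [Nonempty X] (g : X ≃ᵢ X) (n : ℕ) :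
    transLen (g^n) ≤ (n:ℝ) * transLen g := by
  rcases Nat.eq_zero_or_pos n with rfl | hn
  · have h := transLen_le (g^0) (Classical.arbitrary X)
    simp only [pow_zero] at h ⊢
    rw [Nat.cast_zero, zero_mul]
    simpa using h
  · have hnR : (0:ℝ) < n := by exact_mod_cast hn
    have h2 : transLen (g^n) / n ≤ transLen g := by
      apply le_transLen
      intro z
      rw [div_le_iff₀ hnR]
      calc transLen (g^n) ≤ dist z ((g^n) z) := transLen_le _ z
      _ ≤ (n:ℝ) * dist z (g z) := dist_pow_le g z n
      _ = dist z (g z) * n := mul_comm _ _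
    calc transLen (g^n) = (transLen (g^n) / n) * n := by field_simp
    _ ≤ transLen g * n := mul_le_mul_of_nonneg_right h2 hnR.le
    _ = (n:ℝ) * transLen g := mul_comm _ _

lemma c_le_transLen (hgeo : GeodesicSpace X) (htree : GromovHyperbolic X 0) [Nonempty X]
    (g : X ≃ᵢ X) (z : X) : dist z (g (g z)) - dist z (g z) ≤ transLen g := by
  rcases le_or_gt (dist z (g (g z)) - dist z (g z)) 0 with hc | hc
  · exact hc.trans (transLen_nonneg g)
  · obtain ⟨q, hq, hK⟩ := single_core hgeo htree g z hc
    apply le_transLen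
    intro x
    by_contra hlt
    push_neg at hlt
    have hgap : 0 < (dist z (g (g z)) - dist z (g z)) - dist x (g x) := by linarith
    obtain ⟨n, hn⟩ := exists_nat_gt ((2 * dist z x) / ((dist z (g (g z)) - dist z (g z)) - dist x (g x)))
    have h1 := hK n
    have h2 : dist z ((g^n) z) ≤ 2 * dist z x + (n:ℝ) * dist x (g x) := by
      have t1 := dist_triangle z x ((g^n) z)
      have t2 := dist_triangle x ((g^n) x) ((g^n) z)
      have t3 : dist ((g^n) x) ((g^n) z) = dist x z := (g^n).dist_eq x z
      have t4 := dist_pow_le g x n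
      have t5 : dist x z = dist z x := dist_comm x z
      rw [t3, t5] at t2
      linarith
    rw [div_lt_iff₀ hgap] at hn
    nlinarith [h1, h2, hn]

lemma transLen_inv (g : X ≃ᵢ X) : transLen g⁻¹ = transLen g := by
  unfold transLen
  congr 1
  ext r
  constructor
  · rintro ⟨x, rfl⟩
    refine ⟨g⁻¹ x, ?_⟩
    show dist (g⁻¹ x) (g (g⁻¹ x)) = dist x (g⁻¹ x)
    rw [show g (g⁻¹ x) = x by simp]
    exact dist_comm _ _
  · rintro ⟨x, rfl⟩
    refine ⟨g x, ?_⟩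
    show dist (g x) (g⁻¹ (g x)) = dist x (g x)
    rw [show g⁻¹ (g x) = x by simp]
    exact dist_comm _ _

lemma transLen_mul_comm (s u : X ≃ᵢ X) : transLen (s*u) = transLen (u*s) := by
  unfold transLen
  congr 1
  ext r
  constructor
  · rintro ⟨x, rfl⟩
    refine ⟨u x, ?_⟩
    show dist (u x) ((u*s) (u x)) = dist x ((s*u) x)
    rw [show (u*s) (u x) = u (s (u x)) from rfl, u.dist_eq]
    rfl
  · rintro ⟨x, rfl⟩
    refine ⟨s x, ?_⟩
    show dist (s x) ((s*u) (s x)) = dist x ((u*s) x)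
    rw [show (s*u) (s x) = s (u (s x)) from rfl, s.dist_eq]
    rfl

/-- Quasi-convexity of displacement along geodesics in a tree. -/
lemma disp_btw (hgeo : GeodesicSpace X) (htree : GromovHyperbolic X 0) (s : X ≃ᵢ X)
    {a b v : X} (h : Bt a v b) :
    dist v (s v) ≤ max (dist a (s a)) (dist b (s b)) := by
  have hsb : Bt (s a) (s v) (s b) := bt_map s h
  have hsr : dist (s a) (s v) = dist a v := s.dist_eq a v
  have hsL : dist (s a) (s b) = dist a b := s.dist_eq a b
  have hproj := proj hgeo htree v hsb
  rw [hsr] at hproj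
  have h1 : dist v (s a) = gp v (s a) (s b) + gp (s a) (s b) v := by
    have hp := proj hgeo htree v (btw_left (s a) (s b))
    rwa [dist_self, zero_sub, abs_neg, abs_of_nonneg (gp_nonneg _ _ _)] at hp
  have h2 : dist v (s b) = gp v (s a) (s b) + (dist a b - gp (s a) (s b) v) := by
    have hp := proj hgeo htree v (btw_right (s a) (s b))
    have hgle : gp (s a) (s b) v ≤ dist a b := by
      have h3 := gp_le (s a) (s b) v
      rwa [hsL] at h3
    rw [hsL, abs_of_nonneg (by linarith)] at hp
    rw [hp]
  have t1 : dist v (s a) ≤ dist a v + dist a (s a) := by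
    have ht := dist_triangle v a (s a)
    rw [dist_comm v a] at ht
    exact ht
  have t2 : dist v (s b) ≤ (dist a b - dist a v) + dist b (s b) := by
    have ht := dist_triangle v b (s b)
    have hvb : dist v b = dist a b - dist a v := by
      have hb := h; simp only [Bt] at hb; linarith
    rw [hvb] at ht
    exact ht
  rcases le_total (dist a v) (gp (s a) (s b) v) with hc | hc
  · rw [abs_of_nonpos (by linarith)] at hproj
    refine le_max_iff.mpr (Or.inl ?_); linarith
  · rw [abs_of_nonneg (by linarith)] at hproj
    refine le_max_iff.mpr (Or.inr ?_); linarith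

lemma hdinv (g : X ≃ᵢ X) (x : X) : dist x (g⁻¹ x) = dist x (g x) := by
  have h : dist (g x) (g (g⁻¹ x)) = dist x (g⁻¹ x) := g.dist_eq x (g⁻¹ x)
  rw [show g (g⁻¹ x) = x by simp] at h
  rw [← h, dist_comm]

lemma move' (hgeo : GeodesicSpace X) (htree : GromovHyperbolic X 0) [Nonempty X]
    (g : X ≃ᵢ X) {z v : X} {δ : ℝ} (hb : Bt z v (g z)) (hδ : dist z v = δ)
    (h2 : 2*δ ≤ dist z (g z)) {ρε : ℝ} (htl : transLen g ≤ ρε) :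
    dist v (g v) ≤ max (dist z (g z) - 2*δ) ρε := by
  have h := move hgeo htree g hb hδ h2
  have hc := c_le_transLen hgeo htree g z
  have h0 := transLen_nonneg g
  rcases le_max_iff.mp h with h' | h'
  · exact le_max_iff.mpr (Or.inl h')
  · refine le_max_iff.mpr (Or.inr ?_)
    rcases le_max_iff.mp h' with h'' | h'' <;> linarith

lemma aux_move (hgeo : GeodesicSpace X) (htree : GromovHyperbolic X 0) [Nonempty X]
    (a b : X ≃ᵢ X) (z : X) (ρ ε : ℝ) (hε : 0 < ε)
    (hta : transLen a ≤ ρ - ε) (htb : transLen b ≤ ρ - ε)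
    (hκa : 2*(ε/16) ≤ dist z (a z)) (hκb : 2*(ε/16) ≤ dist z (b z))
    (hG : ε/16 ≤ gp z (a z) (b z)) :
    ∃ v, dist v (a v) ≤ max (dist z (a z) - 2*(ε/16)) (ρ - ε) ∧
         dist v (b v) ≤ max (dist z (b z) - 2*(ε/16)) (ρ - ε) := by
  have hκpos : 0 < ε/16 := by positivity
  obtain ⟨v, hv1, hv2⟩ := exists_btw hgeo z (b z) (ε/16) hκpos.le (by linarith)
  obtain ⟨m, hm1, _, _, hb1, _, hb3⟩ := median hgeo htree z (a z) (b z)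
  have hvm : dist v m = gp z (a z) (b z) - ε/16 := by
    rw [bt_dist hgeo htree hv2 hb3, hv1, hm1, abs_of_nonpos (by linarith)]; ring
  have hmdist : dist m (a z) = dist z (a z) - gp z (a z) (b z) := by
    have h := hb1; simp only [Bt] at h; rw [hm1] at h; linarith
  have hGa : gp z (a z) (b z) ≤ dist z (a z) := gp_le z (a z) (b z)
  have hva : dist v (a z) = dist z (a z) - ε/16 := by
    refine le_antisymm ?_ ?_
    · have h := dist_triangle v m (a z); rw [hvm, hmdist] at h; linarith
    · have h := dist_triangle z v (a z); rw [hv1] at h; linarith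
  have hbta : Bt z v (a z) := by
    simp only [Bt]; rw [hv1, hva]; ring
  exact ⟨v, move' hgeo htree a hbta hv1 (by linarith) hta,
    move' hgeo htree b hv2 hv1 (by linarith) htb⟩

lemma pairwise_aux (hgeo : GeodesicSpace X) (htree : GromovHyperbolic X 0) [Nonempty X]
    (s u : X ≃ᵢ X) (ρ ε : ℝ) (hε : 0 < ε)
    (hs : transLen s ≤ ρ - ε) (hu : transLen u ≤ ρ - ε)
    (hsu : transLen (s*u) ≤ 2*ρ - 2*ε)
    (I : ℝ) (hIlb : ρ ≤ I)
    (hIle : ∀ x, I ≤ max (dist x (s x)) (dist x (u x)))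
    (z : X)
    (hz : max (dist z (s z)) (dist z (u z)) < I + ε/16)
    (hPQ : dist z (s z) ≤ dist z (u z)) : False := by
  have hκpos : 0 < ε/16 := by positivity
  set κ := ε/16 with hκdef
  set P := dist z (s z) with hPdef
  set Q := dist z (u z) with hQdef
  have hρε : 0 ≤ ρ - ε := (transLen_nonneg s).trans hs
  have hQF : max P Q = Q := max_eq_right hPQ
  have hQρ : ρ ≤ Q := hIlb.trans ((hIle z).trans_eq hQF)
  have hQI : Q < I + κ := by rw [← hQF]; exact hz
  have hQ16 : 16*κ ≤ Q := by
    have : ε ≤ ρ := by linarith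
    have : (16:ℝ)*κ = ε := by rw [hκdef]; ring
    linarith
  have hP0 : 0 ≤ P := dist_nonneg
  -- variational contradiction helper
  have contra : ∀ v : X, dist v (s v) ≤ max (P - 2*κ) (ρ - ε) →
      dist v (u v) ≤ max (Q - 2*κ) (ρ - ε) → False := by
    intro v h1 h2
    have hρQ : ρ - ε < Q - κ := by linarith
    have h1' : dist v (s v) < Q - κ := by
      rcases le_max_iff.mp h1 with h | h <;> linarith
    have h2' : dist v (u v) < Q - κ := by
      rcases le_max_iff.mp h2 with h | h <;> linarith
    have h3 := hIle v
    have h4 := max_lt h1' h2'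
    linarith
  rcases lt_or_ge (5*κ) (Q - P) with hgap | hgap
  · -- Case A : Q - P > 5κ; move towards u z
    obtain ⟨v, hv1, hv2⟩ := exists_btw hgeo z (u z) (2*κ) (by linarith) (by rw [← hQdef]; linarith)
    have dvu : dist v (u v) ≤ max (Q - 2*(2*κ)) (ρ - ε) :=
      move' hgeo htree u hv2 hv1 (by rw [← hQdef]; linarith) hu
    have dvs : dist v (s v) ≤ P + 4*κ := by
      have t1 := dist_triangle v z (s z)
      have t2 := dist_triangle v (s z) (s v)
      have t3 : dist (s z) (s v) = dist z v := s.dist_eq z v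
      have t4 : dist v z = dist z v := dist_comm v z
      rw [t3, hv1] at t2
      rw [t4, hv1] at t1
      rw [← hPdef] at t1
      linarith
    have hρQ : ρ - ε < Q - κ := by linarith
    have h1' : dist v (s v) < Q - κ := by linarith
    have h2' : dist v (u v) < Q - κ := by
      rcases le_max_iff.mp dvu with h | h <;> linarith
    have h3 := hIle v
    have h4 := max_lt h1' h2'
    linarith
  · -- Case B : Q - P ≤ 5κ, so P ≥ 11κ
    have hP11 : 11*κ ≤ P := by linarith
    have hPinv : dist z (s⁻¹ z) = P := hdinv s z
    have hQinv : dist z (u⁻¹ z) = Q := hdinv u z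
    rcases le_or_gt κ (gp z (s⁻¹ z) (u z)) with hG1 | hG1
    · -- shared direction of [z, s⁻¹z] and [z, uz]
      obtain ⟨v, hv1, hv2⟩ := aux_move hgeo htree s⁻¹ u z ρ ε hε
        (by rw [transLen_inv]; exact hs) hu
        (by rw [hPinv]; linarith) (by rw [← hQdef]; linarith) hG1
      rw [hPinv] at hv1
      rw [hdinv s v] at hv1
      exact contra v hv1 hv2
    rcases le_or_gt κ (gp z (s z) (u⁻¹ z)) with hG4 | hG4
    · obtain ⟨v, hv1, hv2⟩ := aux_move hgeo htree s u⁻¹ z ρ ε hε hs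
        (by rw [transLen_inv]; exact hu)
        (by rw [← hPdef]; linarith) (by rw [hQinv]; linarith) hG4
      rw [hQinv] at hv2
      rw [hdinv u v] at hv2
      exact contra v hv1 hv2
    -- Case: both Gromov products < κ : the chain argument
    have hG1' : 0 ≤ gp z (s⁻¹ z) (u z) := gp_nonneg _ _ _
    have hG4' : 0 ≤ gp z (s z) (u⁻¹ z) := gp_nonneg _ _ _
    set p1 := s z with hp1
    set p2 := s (u z) with hp2
    set p3 := s (u (s z)) with hp3
    set p4 := s (u (s (u z))) with hp4
    have d12 : dist p1 p2 = Q := s.dist_eq z (u z)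
    have d23 : dist p2 p3 = P := by
      rw [hp2, hp3, s.dist_eq (u z) (u (s z)), u.dist_eq z (s z)]
    have d34 : dist p3 p4 = Q := by
      rw [hp3, hp4, s.dist_eq (u (s z)) (u (s (u z))), u.dist_eq (s z) (s (u z)),
        s.dist_eq z (u z)]
    have d02 : dist z p2 = P + Q - 2 * gp z (s⁻¹ z) (u z) := by
      have h1 : dist z p2 = dist (s⁻¹ z) (u z) := by
        rw [hp2, ← s.dist_eq (s⁻¹ z) (u z), show s (s⁻¹ z) = z by simp]
      have h2 : gp z (s⁻¹ z) (u z) = (dist z (s⁻¹ z) + dist z (u z) - dist (s⁻¹ z) (u z))/2 := rfl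
      rw [hPinv, ← hQdef] at h2
      rw [h1]; linarith
    have d13 : dist p1 p3 = P + Q - 2 * gp z (s z) (u⁻¹ z) := by
      have h1 : dist p1 p3 = dist (u⁻¹ z) (s z) := by
        rw [hp1, hp3, s.dist_eq z (u (s z)), ← u.dist_eq (u⁻¹ z) (s z),
          show u (u⁻¹ z) = z by simp, dist_comm z (u (s z))]
      have h2 : gp z (s z) (u⁻¹ z) = (dist z (s z) + dist z (u⁻¹ z) - dist (s z) (u⁻¹ z))/2 := rfl
      rw [hQinv, ← hPdef, dist_comm (s z) (u⁻¹ z)] at h2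
      rw [h1]; linarith
    have d24 : dist p2 p4 = P + Q - 2 * gp z (s⁻¹ z) (u z) := by
      rw [hp2, hp4, s.dist_eq (u z) (u (s (u z))), u.dist_eq z (s (u z)), ← hp2]
      exact d02
    -- first junction
    have hmin1 := gp_min hgeo htree p2 p1 z p3
    have hgpA : gp p2 p1 p3 = gp z (s z) (u⁻¹ z) := by
      have h : gp p2 p1 p3 = (dist p2 p1 + dist p2 p3 - dist p1 p3)/2 := rfl
      rw [dist_comm p2 p1, d12, d23, d13] at h
      rw [h]; ring
    have hgpB : gp p2 p1 z = Q - gp z (s⁻¹ z) (u z) := by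
      have h : gp p2 p1 z = (dist p2 p1 + dist p2 z - dist p1 z)/2 := rfl
      rw [dist_comm p2 p1, d12, dist_comm p2 z, d02, dist_comm p1 z, ← hPdef] at h
      rw [h]; ring
    have hgp23 : gp p2 z p3 < κ := by
      rw [hgpA, hgpB] at hmin1
      rcases min_le_iff.mp hmin1 with h | h <;> linarith
    have hgp23' : 0 ≤ gp p2 z p3 := gp_nonneg _ _ _
    have d03 : 2*P + Q - 4*κ ≤ dist z p3 := by
      have h : gp p2 z p3 = (dist p2 z + dist p2 p3 - dist z p3)/2 := rfl
      rw [dist_comm p2 z, d02, d23] at h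
      linarith [hgp23, h.symm.le, h.ge]
    -- second junction
    have hmin2 := gp_min hgeo htree p3 p2 z p4
    have hgpC : gp p3 p2 p4 = gp z (s⁻¹ z) (u z) := by
      have h : gp p3 p2 p4 = (dist p3 p2 + dist p3 p4 - dist p2 p4)/2 := rfl
      rw [dist_comm p3 p2, d23, d34, d24] at h
      rw [h]; ring
    have hgpD : κ < gp p3 p2 z := by
      have h : gp p3 p2 z = (dist p3 p2 + dist p3 z - dist p2 z)/2 := rfl
      rw [dist_comm p3 p2, d23, dist_comm p3 z, dist_comm p2 z, d02] at h
      have := d03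
      rw [h]
      linarith
    have hgp34 : gp p3 z p4 < κ := by
      rw [hgpC] at hmin2
      rcases min_le_iff.mp hmin2 with h | h <;> linarith
    have d04 : 2*P + 2*Q - 6*κ ≤ dist z p4 := by
      have h : gp p3 z p4 = (dist p3 z + dist p3 p4 - dist z p4)/2 := rfl
      rw [dist_comm p3 z, d34] at h
      have h2 := h.ge
      linarith [hgp34, h.symm.le, d03]
    have hkey : dist z p4 - dist z p2 ≤ 2*ρ - 2*ε := by
      have h := c_le_transLen hgeo htree (s*u) z
      have hrw1 : (s*u) ((s*u) z) = p4 := rfl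
      have hrw2 : (s*u) z = p2 := rfl
      rw [hrw1, hrw2] at h
      exact h.trans hsu
    have hd02le : dist z p2 ≤ P + Q := by rw [d02]; linarith
    have hεκ : ε = 16*κ := by rw [hκdef]; ring
    linarith

lemma pairwise_core (hgeo : GeodesicSpace X) (htree : GromovHyperbolic X 0) [Nonempty X]
    (s u : X ≃ᵢ X) (ρ ε : ℝ) (hε : 0 < ε)
    (hs : transLen s ≤ ρ - ε) (hu : transLen u ≤ ρ - ε)
    (hsu : transLen (s*u) ≤ 2*ρ - 2*ε) :
    ∃ z, dist z (s z) ≤ ρ ∧ dist z (u z) ≤ ρ := by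
  by_contra hcon
  push_neg at hcon
  set F : X → ℝ := fun x => max (dist x (s x)) (dist x (u x)) with hF
  have hFlb : ∀ x, ρ ≤ F x := by
    intro x
    rcases le_or_gt (dist x (s x)) ρ with h | h
    · exact le_max_iff.mpr (Or.inr (hcon x h).le)
    · exact le_max_iff.mpr (Or.inl h.le)
  have hFnn : ∀ x, (0:ℝ) ≤ F x := fun x => le_max_iff.mpr (Or.inl dist_nonneg)
  set I := sInf (Set.range F) with hI
  have hIlb : ρ ≤ I := le_csInf (Set.range_nonempty F) (by rintro y ⟨x, rfl⟩; exact hFlb x)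
  have hIle : ∀ x, I ≤ F x := fun x =>
    csInf_le ⟨0, by rintro y ⟨w, rfl⟩; exact hFnn w⟩ ⟨x, rfl⟩
  have hκpos : 0 < ε/16 := by positivity
  obtain ⟨y0, ⟨z, rfl⟩, hzI⟩ :=
    exists_lt_of_csInf_lt (Set.range_nonempty F) (lt_add_of_pos_right I hκpos)
  rcases le_total (dist z (s z)) (dist z (u z)) with hPQ | hPQ
  · exact pairwise_aux hgeo htree s u ρ ε hε hs hu hsu I hIlb hIle z hzI hPQ
  · have hsu' : transLen (u*s) ≤ 2*ρ - 2*ε := by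
      rw [transLen_mul_comm]; exact hsu
    have hIle' : ∀ x, I ≤ max (dist x (u x)) (dist x (s x)) := by
      intro x; rw [max_comm]; exact hIle x
    have hz' : max (dist z (u z)) (dist z (s z)) < I + ε/16 := by
      rw [max_comm]; exact hzI
    exact pairwise_aux hgeo htree u s ρ ε hε hu hs hsu' I hIlb hIle' z hz' hPQ

/-- Helly property for between-convex sets in a tree. -/
lemma helly (hgeo : GeodesicSpace X) (htree : GromovHyperbolic X 0) {ι : Type*}
    [DecidableEq ι] (T : Finset ι) :
    ∀ C : ι → Set X,
    (∀ i, ∀ a ∈ C i, ∀ b ∈ C i, ∀ v, Bt a v b → v ∈ C i) →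
    (∀ i ∈ T, ∀ j ∈ T, (C i ∩ C j).Nonempty) → T.Nonempty →
    ∃ x, ∀ i ∈ T, x ∈ C i := by
  induction T using Finset.induction_on with
  | empty => intro C _ _ hne; simp at hne
  | @insert i T' hnotmem ih =>
    intro C hcv hpair hne
    rcases T'.eq_empty_or_nonempty with rfl | hT'
    · obtain ⟨x, hx, -⟩ := hpair i (by simp) i (by simp)
      refine ⟨x, ?_⟩
      intro j hj
      rcases Finset.mem_insert.mp hj with rfl | hj'
      · exact hx
      · simp at hj'
    · have hcv' : ∀ j, ∀ a ∈ C j ∩ C i, ∀ b ∈ C j ∩ C i, ∀ v, Bt a v b → v ∈ C j ∩ C i := by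
        intro j a ha b hb v hv
        exact ⟨hcv j a ha.1 b hb.1 v hv, hcv i a ha.2 b hb.2 v hv⟩
      have hpair' : ∀ j ∈ T', ∀ k ∈ T', ((C j ∩ C i) ∩ (C k ∩ C i)).Nonempty := by
        intro j hj k hk
        have hj1 : j ∈ insert i T' := Finset.mem_insert_of_mem hj
        have hk1 : k ∈ insert i T' := Finset.mem_insert_of_mem hk
        have hi1 : i ∈ insert i T' := Finset.mem_insert_self i T'
        obtain ⟨p, hpj, hpk⟩ := hpair j hj1 k hk1
        obtain ⟨q1, hq1j, hq1i⟩ := hpair j hj1 i hi1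
        obtain ⟨q2, hq2k, hq2i⟩ := hpair k hk1 i hi1
        obtain ⟨m, -, -, -, b1, b2, b3⟩ := median hgeo htree p q1 q2
        have hmj : m ∈ C j := hcv j p hpj q1 hq1j m b1
        have hmk : m ∈ C k := hcv k p hpk q2 hq2k m b3
        have hmi : m ∈ C i := hcv i q1 hq1i q2 hq2i m b2
        exact ⟨m, ⟨hmj, hmi⟩, ⟨hmk, hmi⟩⟩
      obtain ⟨x, hx⟩ := ih (fun j => C j ∩ C i) hcv' hpair' hT'
      refine ⟨x, ?_⟩
      intro j hj
      rcases Finset.mem_insert.mp hj with rfl | hj'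
      · obtain ⟨j₀, hj₀⟩ := hT'
        exact (hx j₀ hj₀).2
      · exact (hx j hj').1

end TreeWork





namespace TreeWork

variable {X : Type*} [MetricSpace X] {S : Set (X ≃ᵢ X)}

lemma Sfin_pow (hfin : S.Finite) (n : ℕ) : (S^n).Finite := by
  induction n with
  | zero => rw [pow_zero]; exact Set.finite_one
  | succ k ih => rw [pow_succ]; exact ih.mul hfin

lemma Sne_pow (hne : S.Nonempty) (n : ℕ) : (S^n).Nonempty := by
  induction n with
  | zero => rw [pow_zero]; exact Set.one_nonempty
  | succ k ih => rw [pow_succ]; exact ih.mul hne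

lemma jda_le_of (hne : S.Nonempty) {x : X} {B : ℝ} (h : ∀ s ∈ S, dist x (s x) ≤ B) :
    jointDispAt S x ≤ B :=
  csSup_le (hne.image _) (by rintro y ⟨s, hs, rfl⟩; exact h s hs)

lemma le_jda (hfin : S.Finite) {s : X ≃ᵢ X} (hs : s ∈ S) (x : X) :
    dist x (s x) ≤ jointDispAt S x :=
  le_csSup (hfin.image _).bddAbove (Set.mem_image_of_mem _ hs)

lemma jda_nonneg (hfin : S.Finite) (hne : S.Nonempty) (x : X) : 0 ≤ jointDispAt S x := by
  obtain ⟨s, hs⟩ := hne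
  exact dist_nonneg.trans (le_jda hfin hs x)

lemma jmd_le (hfin : S.Finite) (hne : S.Nonempty) (x : X) :
    jointMinDisp S ≤ jointDispAt S x :=
  csInf_le ⟨0, by rintro y ⟨w, rfl⟩; exact jda_nonneg hfin hne w⟩ ⟨x, rfl⟩

lemma le_jmd [Nonempty X] {B : ℝ} (h : ∀ x, B ≤ jointDispAt S x) : B ≤ jointMinDisp S :=
  le_csInf (Set.range_nonempty _) (by rintro y ⟨x, rfl⟩; exact h x)

lemma mem_pow_disp (hfin : S.Finite) :
    ∀ (n : ℕ) (w : X ≃ᵢ X), w ∈ S^n → ∀ x, dist x (w x) ≤ n * jointDispAt S x := by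
  intro n
  induction n with
  | zero =>
    intro w hw x
    rw [pow_zero] at hw
    rw [Set.mem_one] at hw
    subst hw
    simp
  | succ k ih =>
    intro w hw x
    rw [pow_succ'] at hw
    obtain ⟨b, hb, a, ha, rfl⟩ := Set.mem_mul.mp hw
    have h1 : dist x ((b*a) x) ≤ dist x (b x) + dist x (a x) := by
      have ht := dist_triangle x (b x) ((b*a) x)
      have h2 : dist (b x) ((b*a) x) = dist x (a x) := by
        rw [show (b*a) x = b (a x) from rfl, b.dist_eq]
      rwa [h2] at ht
    have h2 := ih a ha x
    have h3 := le_jda hfin hb x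
    push_cast
    calc dist x ((b*a) x) ≤ dist x (b x) + dist x (a x) := h1
    _ ≤ jointDispAt S x + (k:ℝ) * jointDispAt S x := by linarith
    _ = ((k:ℝ)+1) * jointDispAt S x := by ring

lemma jmd_pow_le (hfin : S.Finite) (hne : S.Nonempty) [Nonempty X] (n : ℕ) (hn : 1 ≤ n) :
    jointMinDisp (S^n) ≤ (n:ℝ) * jointMinDisp S := by
  have hnR : (0:ℝ) < n := by exact_mod_cast hn
  have key : ∀ x, jointMinDisp (S^n) / n ≤ jointDispAt S x := by
    intro x
    rw [div_le_iff₀ hnR]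
    calc jointMinDisp (S^n) ≤ jointDispAt (S^n) x := jmd_le (Sfin_pow hfin n) (Sne_pow hne n) x
    _ ≤ (n:ℝ) * jointDispAt S x := jda_le_of (Sne_pow hne n) (fun w hw => mem_pow_disp hfin n w hw x)
    _ = jointDispAt S x * n := mul_comm _ _
  have h := le_jmd key
  rw [div_le_iff₀ hnR] at h
  linarith

lemma mu_le_jmd (hfin : S.Finite) (hne : S.Nonempty) [Nonempty X] :
    sSup (transLen '' S) ≤ jointMinDisp S := by
  apply csSup_le (hne.image _)
  rintro y ⟨s, hs, rfl⟩
  exact le_jmd (fun x => (transLen_le s x).trans (le_jda hfin hs x))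

lemma key_le (hgeo : GeodesicSpace X) (htree : GromovHyperbolic X 0)
    (hfin : S.Finite) (hne : S.Nonempty) [Nonempty X] :
    jointMinDisp S ≤ max (sSup (transLen '' S)) (sSup (transLen '' (S*S)) / 2) := by
  apply le_of_forall_pos_le_add
  intro ε hε
  set r := max (sSup (transLen '' S)) (sSup (transLen '' (S*S)) / 2) with hr
  have hmu : ∀ s ∈ S, transLen s ≤ r := fun s hs =>
    (le_csSup (hfin.image _).bddAbove (Set.mem_image_of_mem _ hs)).trans (le_max_left _ _)
  have hmu2 : ∀ s ∈ S, ∀ u ∈ S, transLen (s*u) ≤ 2*r := by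
    intro s hs u hu
    have h1 : transLen (s*u) ≤ sSup (transLen '' (S*S)) :=
      le_csSup ((hfin.mul hfin).image _).bddAbove
        (Set.mem_image_of_mem _ (Set.mul_mem_mul hs hu))
    have h2 : sSup (transLen '' (S*S))/2 ≤ r := le_max_right _ _
    linarith
  have hpair : ∀ s ∈ S, ∀ u ∈ S, ∃ z, dist z (s z) ≤ r + ε ∧ dist z (u z) ≤ r + ε := by
    intro s hs u hu
    refine pairwise_core hgeo htree s u (r+ε) ε hε ?_ ?_ ?_
    · have := hmu s hs; linarith
    · have := hmu u hu; linarith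
    · have := hmu2 s hs u hu; linarith
  classical
  set T := hfin.toFinset with hT
  have hTmem : ∀ s, s ∈ T ↔ s ∈ S := fun s => hfin.mem_toFinset
  have hTne : T.Nonempty := by
    obtain ⟨s, hs⟩ := hne; exact ⟨s, (hTmem s).mpr hs⟩
  set C : (X ≃ᵢ X) → Set X := fun s => {x | dist x (s x) ≤ r + ε} with hC
  have hcv : ∀ i, ∀ a ∈ C i, ∀ b ∈ C i, ∀ v, Bt a v b → v ∈ C i := by
    intro i a ha b hb v hv
    have h := disp_btw hgeo htree i hv
    simp only [hC, Set.mem_setOf_eq] at ha hb ⊢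
    rcases le_max_iff.mp h with h' | h' <;> linarith
  have hpair' : ∀ i ∈ T, ∀ j ∈ T, (C i ∩ C j).Nonempty := by
    intro i hi j hj
    obtain ⟨z, h1, h2⟩ := hpair i ((hTmem i).mp hi) j ((hTmem j).mp hj)
    exact ⟨z, h1, h2⟩
  obtain ⟨x, hx⟩ := helly hgeo htree T C hcv hpair' hTne
  have hjda : jointDispAt S x ≤ r + ε :=
    jda_le_of hne (fun s hs => hx s ((hTmem s).mpr hs))
  exact (jmd_le hfin hne x).trans hjda

lemma jmd_eq (hgeo : GeodesicSpace X) (htree : GromovHyperbolic X 0)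
    (hfin : S.Finite) (hne : S.Nonempty) [Nonempty X] :
    jointMinDisp S = max (sSup (transLen '' S)) (sSup (transLen '' (S*S)) / 2) := by
  refine le_antisymm (key_le hgeo htree hfin hne) (max_le ?_ ?_)
  · exact mu_le_jmd hfin hne
  · have h1 : sSup (transLen '' (S*S)) ≤ jointMinDisp (S*S) :=
      mu_le_jmd (hfin.mul hfin) (hne.mul hne)
    have h2 : jointMinDisp (S*S) ≤ 2 * jointMinDisp S := by
      have h := jmd_pow_le hfin hne 2 (by norm_num)
      rw [pow_two] at h
      have : ((2:ℕ):ℝ) = 2 := by norm_num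
      rw [this] at h
      exact h
    linarith

lemma mu_pow_ge (hgeo : GeodesicSpace X) (htree : GromovHyperbolic X 0)
    (hfin : S.Finite) (hne : S.Nonempty) [Nonempty X] (n : ℕ) (hn : 1 ≤ n) :
    (n:ℝ) * sSup (transLen '' S) ≤ sSup (transLen '' (S^n)) := by
  have hnR : (0:ℝ) < n := by exact_mod_cast hn
  have key : sSup (transLen '' S) ≤ sSup (transLen '' (S^n)) / n := by
    apply csSup_le (hne.image _)
    rintro y ⟨s, hs, rfl⟩
    rw [le_div_iff₀ hnR]
    calc transLen s * n = (n:ℝ) * transLen s := mul_comm _ _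
    _ ≤ transLen (s^n) := transLen_pow_ge hgeo htree s n
    _ ≤ sSup (transLen '' (S^n)) :=
        le_csSup ((Sfin_pow hfin n).image _).bddAbove
          (Set.mem_image_of_mem _ (Set.pow_mem_pow hs))
  calc (n:ℝ) * sSup (transLen '' S) ≤ (n:ℝ) * (sSup (transLen '' (S^n)) / n) :=
        mul_le_mul_of_nonneg_left key hnR.le
  _ = sSup (transLen '' (S^n)) := by field_simp

lemma jmd_pow_eq (hgeo : GeodesicSpace X) (htree : GromovHyperbolic X 0)
    (hfin : S.Finite) (hne : S.Nonempty) [Nonempty X] (n : ℕ) (hn : 1 ≤ n) :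
    jointMinDisp (S^n) = (n:ℝ) * jointMinDisp S := by
  refine le_antisymm (jmd_pow_le hfin hne n hn) ?_
  have hnR : (0:ℝ) ≤ n := by positivity
  have h1 := jmd_eq hgeo htree (Sfin_pow hfin n) (Sne_pow hne n) (S := S^n)
  have h2 := jmd_eq hgeo htree hfin hne (S := S)
  have hpow : S^n * S^n = S^(n+n) := (pow_add S n n).symm
  have hSS : (S*S)^n = S^(n+n) := by
    rw [← pow_two, ← pow_mul, two_mul]
  have hA : (n:ℝ) * sSup (transLen '' S) ≤ sSup (transLen '' (S^n)) :=
    mu_pow_ge hgeo htree hfin hne n hn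
  have hB : (n:ℝ) * sSup (transLen '' (S*S)) ≤ sSup (transLen '' (S^(n+n))) := by
    rw [← hSS]
    exact mu_pow_ge hgeo htree (hfin.mul hfin) (hne.mul hne) n hn
  rw [h1, h2, hpow]
  rcases le_total (sSup (transLen '' S)) (sSup (transLen '' (S*S)) / 2) with hcmp | hcmp
  · rw [max_eq_right hcmp]
    refine le_trans ?_ (le_max_right _ _)
    linarith
  · rw [max_eq_left hcmp]
    refine le_trans ?_ (le_max_left _ _)
    exact hA

lemma asymp_eq (hgeo : GeodesicSpace X) (htree : GromovHyperbolic X 0)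
    (hfin : S.Finite) (hne : S.Nonempty) [Nonempty X] :
    asympDisp S = jointMinDisp S := by
  unfold asympDisp
  have hev : ∀ᶠ n : ℕ in Filter.atTop, jointMinDisp (S^n) / (n:ℝ) = jointMinDisp S := by
    rw [Filter.eventually_atTop]
    refine ⟨1, fun n hn => ?_⟩
    have hn0 : (0:ℝ) < n := by exact_mod_cast hn
    rw [jmd_pow_eq hgeo htree hfin hne n hn, mul_div_cancel_left₀ _ hn0.ne']
  rw [Filter.limsup_congr hev, Filter.limsup_const]

lemma jmd_singleton [Nonempty X] (h : X ≃ᵢ X) :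
    jointMinDisp {h} = transLen h := by
  unfold jointMinDisp transLen
  have heq : jointDispAt {h} = fun x => dist x (h x) := by
    funext x
    unfold jointDispAt
    rw [Set.image_singleton, csSup_singleton]
  rw [heq]

lemma asymp_singleton (hgeo : GeodesicSpace X) (htree : GromovHyperbolic X 0) [Nonempty X]
    (s : X ≃ᵢ X) : asympDisp {s} = transLen s := by
  unfold asympDisp
  have hev : ∀ᶠ n : ℕ in Filter.atTop,
      jointMinDisp (({s} : Set (X ≃ᵢ X))^n) / (n:ℝ) = transLen s := by
    rw [Filter.eventually_atTop]
    refine ⟨1, fun n hn => ?_⟩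
    have hn0 : (0:ℝ) < n := by exact_mod_cast hn
    rw [Set.singleton_pow, jmd_singleton]
    have heq : transLen (s^n) = (n:ℝ) * transLen s :=
      le_antisymm (transLen_pow_le s n) (transLen_pow_ge hgeo htree s n)
    rw [heq, mul_div_cancel_left₀ _ hn0.ne']
  rw [Filter.limsup_congr hev, Filter.limsup_const]

lemma lamD_eq (hgeo : GeodesicSpace X) (htree : GromovHyperbolic X 0) [Nonempty X]
    (T : Set (X ≃ᵢ X)) : lamD T = sSup (transLen '' T) := by
  unfold lamD
  congr 1
  apply Set.image_congr
  intro s _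
  exact asymp_singleton hgeo htree s

end TreeWork

open TreeWork in
/-- For a finite set `S` of isometries of a real tree (a geodesic `0`-hyperbolic
space), `L(S) = ℓ(S) = λ₂(S)` and `L(S^n) = n L(S)` for every `n ≥ 1`. -/
theorem jointMinDisp_growth_tree {X : Type*} [MetricSpace X]
    (hgeo : GeodesicSpace X) (htree : GromovHyperbolic X 0)
    (S : Set (X ≃ᵢ X)) (hfin : S.Finite) (hne : S.Nonempty) :
    jointMinDisp S = asympDisp S ∧
    jointMinDisp S = max (lamD S) (lamD (S ^ 2) / 2) ∧
    ∀ n : ℕ, 1 ≤ n → jointMinDisp (S ^ n) = n * jointMinDisp S := by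
  rcases isEmpty_or_nonempty X with hX | hX
  · have h0 : ∀ T : Set (X ≃ᵢ X), jointMinDisp T = 0 := by
      intro T
      unfold jointMinDisp
      rw [Set.range_eq_empty, Real.sInf_empty]
    have hasymp : ∀ T : Set (X ≃ᵢ X), asympDisp T = 0 := by
      intro T
      unfold asympDisp
      have h : (fun n : ℕ => jointMinDisp (T^n) / n) = fun _ : ℕ => (0:ℝ) := by
        funext n; rw [h0, zero_div]
      rw [h, Filter.limsup_const]
    have hlam : ∀ T : Set (X ≃ᵢ X), T.Nonempty → lamD T = 0 := by
      intro T hTne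
      unfold lamD
      have himg : (fun s : X ≃ᵢ X => asympDisp {s}) '' T = {0} := by
        rw [Set.image_congr (fun s _ => hasymp {s})]
        exact hTne.image_const 0
      rw [himg, csSup_singleton]
    refine ⟨?_, ?_, ?_⟩
    · rw [h0, hasymp]
    · rw [h0, hlam S hne, hlam (S^2) (Sne_pow hne 2)]; norm_num
    · intro n hn; rw [h0, h0]; ring
  · refine ⟨(asymp_eq hgeo htree hfin hne).symm, ?_, ?_⟩
    · rw [jmd_eq hgeo htree hfin hne, lamD_eq hgeo htree S, lamD_eq hgeo htree (S^2), pow_two]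
    · intro n hn
      exact jmd_pow_eq hgeo htree hfin hne n hn
end

section
/- Let X be a geodesic δ-hyperbolic metric space (δ ≥ 0) and S ⊆ Isom(X) a finite set of isometries. Then for every integer n ≥ 1, (1/n)·L(S^n) ≥ L(S·S⁻¹)/2 − 2δ, where S·S⁻¹ := { s·t⁻¹ : s,t ∈ S }. -/
open Pointwise Filter

section Aux

variable {X : Type*} [MetricSpace X] {δ : ℝ}

lemma dist_to_midpoint' (hgeo : GeodesicSpace X) (hhyp : GromovHyperbolic X δ)
    (A B y : X) (f : ℝ → X) (hf0 : f 0 = A) (hfD : f (dist A B) = B)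
    (hiso : ∀ u ∈ Set.Icc (0:ℝ) (dist A B), ∀ v ∈ Set.Icc (0:ℝ) (dist A B),
      dist (f u) (f v) = |u - v|) :
    dist y (f (dist A B / 2)) ≤ max (dist y A) (dist y B) - dist A B / 2 + 2 * δ := by
  set D := dist A B with hDdef
  have hD : 0 ≤ D := dist_nonneg
  have hmemhalf : D / 2 ∈ Set.Icc (0:ℝ) D := ⟨by linarith, by linarith⟩
  have hmem0 : (0:ℝ) ∈ Set.Icc (0:ℝ) D := ⟨le_rfl, hD⟩
  have hmemD : D ∈ Set.Icc (0:ℝ) D := ⟨hD, le_rfl⟩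
  set M := f (D / 2) with hMdef
  have hAM : dist A M = D / 2 := by
    rw [← hf0, hMdef, hiso 0 hmem0 (D/2) hmemhalf, zero_sub, abs_neg,
      abs_of_nonneg (by linarith : (0:ℝ) ≤ D/2)]
  have hBM : dist B M = D / 2 := by
    rw [← hfD, hMdef, hiso D hmemD (D/2) hmemhalf,
      abs_of_nonneg (by linarith : (0:ℝ) ≤ D - D/2)]
    ring
  have hseg : IsGeodesicSegment (f '' Set.Icc (0:ℝ) D) A B := ⟨f, hf0, hfD, hiso, rfl⟩
  obtain ⟨sbc, hsbc⟩ := hgeo B y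
  obtain ⟨sca, hsca⟩ := hgeo y A
  obtain ⟨h1, -, -⟩ := hhyp A B y _ sbc sca hseg hsbc hsca
  obtain ⟨z, hz, hdz⟩ := h1 M ⟨D/2, hmemhalf, rfl⟩
  have hdz' : dist z M ≤ δ := by rw [dist_comm]; exact hdz
  rcases hz with hz | hz
  · obtain ⟨g, hg0, hg1, hgiso, hgs⟩ := hsbc
    rw [hgs] at hz
    obtain ⟨u, hu, rfl⟩ := hz
    have h0 : (0:ℝ) ∈ Set.Icc (0:ℝ) (dist B y) := ⟨le_rfl, dist_nonneg⟩
    have hE : dist B y ∈ Set.Icc (0:ℝ) (dist B y) := ⟨dist_nonneg, le_rfl⟩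
    have hBz : dist B (g u) = u := by
      rw [← hg0, hgiso 0 h0 u hu, zero_sub, abs_neg, abs_of_nonneg hu.1]
    have hzy : dist (g u) y = dist B y - u := by
      have h := hgiso u hu _ hE
      rw [hg1] at h
      rw [h, abs_of_nonpos (by linarith [hu.2] : u - dist B y ≤ 0)]
      ring
    have k1 : D / 2 ≤ u + δ := by
      have t1 : dist B M ≤ dist B (g u) + dist (g u) M := dist_triangle _ _ _
      rw [hBM, hBz] at t1
      linarith [hdz']
    have k2 : dist y M ≤ dist y (g u) + dist (g u) M := dist_triangle _ _ _
    have k3 : dist y (g u) = dist B y - u := by rw [dist_comm, hzy]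
    have : dist y M ≤ dist y B - D/2 + 2*δ := by
      rw [dist_comm y B]
      rw [k3] at k2
      linarith [hdz']
    have hmax := le_max_right (dist y A) (dist y B)
    linarith
  · obtain ⟨g, hg0, hg1, hgiso, hgs⟩ := hsca
    rw [hgs] at hz
    obtain ⟨u, hu, rfl⟩ := hz
    have h0 : (0:ℝ) ∈ Set.Icc (0:ℝ) (dist y A) := ⟨le_rfl, dist_nonneg⟩
    have hE : dist y A ∈ Set.Icc (0:ℝ) (dist y A) := ⟨dist_nonneg, le_rfl⟩
    have hyz : dist y (g u) = u := by
      rw [← hg0, hgiso 0 h0 u hu, zero_sub, abs_neg, abs_of_nonneg hu.1]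
    have hzA : dist (g u) A = dist y A - u := by
      have h := hgiso u hu _ hE
      rw [hg1] at h
      rw [h, abs_of_nonpos (by linarith [hu.2] : u - dist y A ≤ 0)]
      ring
    have k1 : D / 2 ≤ dist y A - u + δ := by
      have t1 : dist A M ≤ dist A (g u) + dist (g u) M := dist_triangle _ _ _
      rw [hAM, dist_comm A (g u), hzA] at t1
      linarith [hdz']
    have k2 : dist y M ≤ dist y (g u) + dist (g u) M := dist_triangle _ _ _
    have : dist y M ≤ dist y A - D/2 + 2*δ := by
      rw [hyz] at k2
      linarith [hdz']
    have hmax := le_max_left (dist y A) (dist y B)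
    linarith

lemma pow_finite' {G : Type*} [Monoid G] {S : Set G} (hfin : S.Finite) :
    ∀ n : ℕ, (S ^ n).Finite
  | 0 => by rw [pow_zero]; exact Set.finite_one
  | (n+1) => by rw [pow_succ]; exact (pow_finite' hfin n).mul hfin

lemma exists_far_pair (hδ : 0 ≤ δ) (hgeo : GeodesicSpace X) (hhyp : GromovHyperbolic X δ)
    (S : Set (X ≃ᵢ X)) (hfin : S.Finite) (hne : S.Nonempty) (x : X) :
    ∀ n : ℕ, ∃ w₁ ∈ S ^ n, ∃ w₂ ∈ S ^ n,
      (n : ℝ) * (jointMinDisp (S * S⁻¹) - 4 * δ) ≤ dist (w₁⁻¹ x) (w₂⁻¹ x) := by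
  intro n
  induction n with
  | zero =>
    refine ⟨1, by rw [pow_zero]; exact Set.one_mem_one,
            1, by rw [pow_zero]; exact Set.one_mem_one, ?_⟩
    simp
  | succ n ih =>
    obtain ⟨w₁, h₁, w₂, h₂, hD⟩ := ih
    set Λ := jointMinDisp (S * S⁻¹) with hΛdef
    set P := w₁⁻¹ x with hP
    set Q := w₂⁻¹ x with hQ
    obtain ⟨sPQ, f, hf0, hfD, hiso, hs⟩ := hgeo P Q
    set D := dist P Q with hDdef
    set M := f (D / 2) with hM
    -- extract a pair from S * S⁻¹ moving M by at least Λ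
    have hSSfin : (S * S⁻¹).Finite := hfin.mul hfin.inv
    have hSSne : (S * S⁻¹).Nonempty := hne.mul hne.inv
    have himne : ((fun g : X ≃ᵢ X => dist M (g M)) '' (S * S⁻¹)).Nonempty := hSSne.image _
    have hmem : sSup ((fun g : X ≃ᵢ X => dist M (g M)) '' (S * S⁻¹))
        ∈ ((fun g : X ≃ᵢ X => dist M (g M)) '' (S * S⁻¹)) :=
      himne.csSup_mem (hSSfin.image _)
    obtain ⟨g, hgSS, hgeq⟩ := hmem
    have hbdd : BddBelow (Set.range (jointDispAt (S * S⁻¹))) := by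
      refine ⟨0, ?_⟩
      rintro v ⟨p, rfl⟩
      exact Real.sSup_nonneg (by rintro r ⟨s, -, rfl⟩; exact dist_nonneg)
    have hΛle : Λ ≤ dist M (g M) := by
      have hle1 : Λ ≤ jointDispAt (S * S⁻¹) M := csInf_le hbdd ⟨M, rfl⟩
      have hle2 : jointDispAt (S * S⁻¹) M = dist M (g M) := by
        rw [jointDispAt]
        exact hgeq.symm
      linarith
    obtain ⟨s₀, hs₀, t₀, ht₀, hg⟩ := Set.mem_mul.mp hgSS
    have ht₀S : t₀⁻¹ ∈ S := Set.mem_inv.mp ht₀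
    have key : dist (s₀⁻¹ M) (t₀ M) = dist M (g M) := by
      have e1 : dist (s₀⁻¹ M) (s₀⁻¹ (g M)) = dist M (g M) := (s₀⁻¹).dist_eq M (g M)
      rw [← e1]
      congr 1
      have e2 : s₀⁻¹ (g M) = (s₀⁻¹ * g) M := rfl
      rw [e2, ← hg, inv_mul_cancel_left]
    -- midpoint estimate for images of the geodesic
    have happ : ∀ (u : X ≃ᵢ X) (y : X),
        dist y (u M) ≤ max (dist y (u P)) (dist y (u Q)) - D / 2 + 2 * δ := by
      intro u y
      have hd : dist (u P) (u Q) = D := u.dist_eq P Q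
      have h1 : (fun r => u (f r)) 0 = u P := by
        show u (f 0) = u P
        rw [hf0]
      have h2 : (fun r => u (f r)) (dist (u P) (u Q)) = u Q := by
        show u (f (dist (u P) (u Q))) = u Q
        rw [hd, hfD]
      have h3 : ∀ a ∈ Set.Icc (0:ℝ) (dist (u P) (u Q)),
          ∀ b ∈ Set.Icc (0:ℝ) (dist (u P) (u Q)),
          dist ((fun r => u (f r)) a) ((fun r => u (f r)) b) = |a - b| := by
        intro a ha b hb
        rw [hd] at ha hb
        show dist (u (f a)) (u (f b)) = |a - b|
        rw [u.dist_eq, hiso a ha b hb]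
      have h := dist_to_midpoint' hgeo hhyp (u P) (u Q) y _ h1 h2 h3
      rw [hd] at h
      exact h
    have E0 := happ s₀⁻¹ (t₀ M)
    have E1 := happ t₀ (s₀⁻¹ P)
    have E2 := happ t₀ (s₀⁻¹ Q)
    have hΛ0 : Λ ≤ dist (t₀ M) (s₀⁻¹ M) := by
      rw [dist_comm, key]
      exact hΛle
    -- builder for the four cases
    have build : ∀ (wa : X ≃ᵢ X), wa ∈ S ^ n → ∀ (wb : X ≃ᵢ X), wb ∈ S ^ n →
        Λ + D - 4 * δ ≤ dist (s₀⁻¹ (wa⁻¹ x)) (t₀ (wb⁻¹ x)) →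
        ∃ w₁' ∈ S ^ (n+1), ∃ w₂' ∈ S ^ (n+1),
          ((n+1 : ℕ) : ℝ) * (Λ - 4 * δ) ≤ dist (w₁'⁻¹ x) (w₂'⁻¹ x) := by
      intro wa hwa wb hwb hle
      refine ⟨wa * s₀, by rw [pow_succ]; exact Set.mul_mem_mul hwa hs₀,
             wb * t₀⁻¹, by rw [pow_succ]; exact Set.mul_mem_mul hwb ht₀S, ?_⟩
      have e1 : (wa * s₀)⁻¹ x = s₀⁻¹ (wa⁻¹ x) := by rw [mul_inv_rev]; rfl
      have e2 : (wb * t₀⁻¹)⁻¹ x = t₀ (wb⁻¹ x) := by rw [mul_inv_rev, inv_inv]; rfl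
      rw [e1, e2]
      push_cast
      nlinarith [hD, hle]
    have m0 : Λ + D/2 - 2*δ ≤ max (dist (t₀ M) (s₀⁻¹ P)) (dist (t₀ M) (s₀⁻¹ Q)) := by
      linarith [E0, hΛ0]
    rcases le_max_iff.mp m0 with hA | hB
    · have m1 : Λ + D - 4*δ ≤ max (dist (s₀⁻¹ P) (t₀ P)) (dist (s₀⁻¹ P) (t₀ Q)) := by
        have hc : dist (t₀ M) (s₀⁻¹ P) = dist (s₀⁻¹ P) (t₀ M) := dist_comm _ _
        rw [hc] at hA
        linarith [E1]
      rcases le_max_iff.mp m1 with h11 | h12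
      · exact build w₁ h₁ w₁ h₁ h11
      · exact build w₁ h₁ w₂ h₂ h12
    · have m2 : Λ + D - 4*δ ≤ max (dist (s₀⁻¹ Q) (t₀ P)) (dist (s₀⁻¹ Q) (t₀ Q)) := by
        have hc : dist (t₀ M) (s₀⁻¹ Q) = dist (s₀⁻¹ Q) (t₀ M) := dist_comm _ _
        rw [hc] at hB
        linarith [E2]
      rcases le_max_iff.mp m2 with h21 | h22
      · exact build w₂ h₂ w₁ h₁ h21
      · exact build w₂ h₂ w₂ h₂ h22

end Aux

/-- In a geodesic `δ`-hyperbolic space, for every finite set `S` of isometries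
and every `n ≥ 1`, `(1/n) L(S^n) ≥ L(S·S⁻¹)/2 − 2δ`. -/
theorem jointMinDisp_pow_lower_of_hyperbolic {X : Type*} [MetricSpace X] {δ : ℝ} (hδ : 0 ≤ δ)
    (hgeo : GeodesicSpace X) (hhyp : GromovHyperbolic X δ)
    (S : Set (X ≃ᵢ X)) (hfin : S.Finite) (hne : S.Nonempty) :
    ∀ n : ℕ, 1 ≤ n →
      (1 / (n : ℝ)) * jointMinDisp (S ^ n) ≥ jointMinDisp (S * S⁻¹) / 2 - 2 * δ := by
  intro n hn
  rcases isEmpty_or_nonempty X with hX | hX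
  · have h1 : Set.range (jointDispAt (S ^ n)) = (∅ : Set ℝ) := Set.range_eq_empty _
    have h2 : Set.range (jointDispAt (S * S⁻¹)) = (∅ : Set ℝ) := Set.range_eq_empty _
    rw [ge_iff_le, jointMinDisp, jointMinDisp, h1, h2, Real.sInf_empty]
    norm_num
    linarith
  · have hn0 : 0 < n := lt_of_lt_of_le Nat.zero_lt_one hn
    have hnR : (0:ℝ) < n := by exact_mod_cast hn0
    set Λ := jointMinDisp (S * S⁻¹) with hΛdef
    have key : ∀ p : X, (n:ℝ) * (Λ/2 - 2*δ) ≤ jointDispAt (S ^ n) p := by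
      intro p
      obtain ⟨w₁, h₁, w₂, h₂, hd⟩ := exists_far_pair hδ hgeo hhyp S hfin hne p n
      have hb : BddAbove ((fun s : X ≃ᵢ X => dist p (s p)) '' (S ^ n)) :=
        ((pow_finite' hfin n).image _).bddAbove
      have m1 : dist p (w₁ p) ≤ jointDispAt (S ^ n) p := le_csSup hb ⟨w₁, h₁, rfl⟩
      have m2 : dist p (w₂ p) ≤ jointDispAt (S ^ n) p := le_csSup hb ⟨w₂, h₂, rfl⟩
      have ew1 : w₁ (w₁⁻¹ p) = p := by
        have : (w₁ * w₁⁻¹) p = p := by rw [mul_inv_cancel]; rfl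
        exact this
      have ew2 : w₂ (w₂⁻¹ p) = p := by
        have : (w₂ * w₂⁻¹) p = p := by rw [mul_inv_cancel]; rfl
        exact this
      have t1 : dist (w₁⁻¹ p) (w₂⁻¹ p) ≤ dist (w₁⁻¹ p) p + dist p (w₂⁻¹ p) :=
        dist_triangle _ _ _
      have t2 : dist (w₁⁻¹ p) p = dist p (w₁ p) := by
        rw [← w₁.dist_eq (w₁⁻¹ p) p, ew1]
      have t3 : dist p (w₂⁻¹ p) = dist p (w₂ p) := by
        rw [← w₂.dist_eq p (w₂⁻¹ p), ew2, dist_comm]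
      nlinarith [hd, m1, m2]
    have hsinf : (n:ℝ) * (Λ/2 - 2*δ) ≤ jointMinDisp (S ^ n) := by
      rw [jointMinDisp]
      have : Nonempty X := hX
      apply le_csInf (Set.range_nonempty _)
      rintro b ⟨p, rfl⟩
      exact key p
    rw [ge_iff_le]
    have hmul := mul_le_mul_of_nonneg_left hsinf
      (le_of_lt (by positivity : (0:ℝ) < 1/(n:ℝ)))
    have heq : (1/(n:ℝ)) * ((n:ℝ) * (Λ/2 - 2*δ)) = Λ/2 - 2*δ := by
      field_simp
    linarith
end
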